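/- arXiv:1908.07014 — 7 statements merged into one kernel-verified Lean document; each statement's English description precedes it below -/
import Mathlib

section
/- Let p be a prime and f ∈ 𝔽_p[t,t⁻¹] a nonconstant Laurent polynomial. Let q be a power of p with (deg_t f + deg_{t⁻¹} f)² < q. If f(𝔽_q) ⊆ 𝔽_{q'} for a finite field 𝔽_{q'} ⊆ an algebraic closure of 𝔽_p, then 𝔽_q ⊆ 𝔽_{q'}. -/
/-- Evaluation of a Laurent polynomial (given by its finitely supported
coefficient function `ℤ →₀ K`) at an element of `K`, using `zpow`. -/
noncomputable def laurentEval {K : Type*} [Field K] (f : ℤ →₀ K) (x : K) : K :=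
  f.sum fun k c => c * x ^ k

open Polynomial in
lemma mem_subfield_of_pow_natCard {K : Type*} [Field K] (F' : Subfield K) [Finite ↥F']
    (y : K) (hy : y ^ (Nat.card ↥F') = y) : y ∈ F' := by
  classical
  have : Fintype ↥F' := Fintype.ofFinite _
  set q' := Nat.card ↥F' with hq'
  have hq2 : 2 ≤ q' := by
    rw [hq', Nat.card_eq_fintype_card]
    exact Fintype.one_lt_card
  by_contra hy'
  set P : Polynomial K := X ^ q' - X with hP
  have hdeg : P.natDegree ≤ q' := by
    apply (Polynomial.natDegree_sub_le _ _).trans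
    simp
    omega
  have hPne : P ≠ 0 := fun h => by
    have := congrArg (fun Q => Polynomial.coeff Q q') h
    simp only [hP, Polynomial.coeff_sub, Polynomial.coeff_X_pow, Polynomial.coeff_X,
      Polynomial.coeff_zero, if_pos rfl, if_neg (by omega : ¬ 1 = q')] at this
    simp at this
  have hFfin : (F' : Set K).Finite := Set.toFinite _
  set s : Finset K := insert y hFfin.toFinset with hs
  have hcards : q' + 1 ≤ s.card := by
    rw [hs, Finset.card_insert_of_notMem (by simp [hy'])]
    have : hFfin.toFinset.card = q' := by
      rw [← Set.ncard_eq_toFinset_card _ hFfin, ← Nat.card_coe_set_eq, hq']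
      rfl
    omega
  have : P = 0 := by
    apply Polynomial.eq_zero_of_natDegree_lt_card_of_eval_eq_zero' P s
    · intro z hz
      rw [hs, Finset.mem_insert] at hz
      have hz' : z ^ q' = z := by
        rcases hz with rfl | hz
        · exact hy
        · have hzF : z ∈ F' := by simpa using hz
          have := congrArg Subtype.val (FiniteField.pow_card (⟨z, hzF⟩ : ↥F'))
          simp only [SubmonoidClass.coe_pow] at this
          rwa [hq', Nat.card_eq_fintype_card]
      simp [hP, hz', sub_eq_zero]
    · omega
  exact hPne this

open Polynomial in
lemma key_contra {K : Type*} [Field K] (f : ℤ →₀ K)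
    (hnonconst : ∃ k ∈ f.support, k ≠ 0)
    (F : Subfield K) [Finite ↥F] (a b m : ℕ) (hm : 2 ≤ m)
    (hsupp : ∀ k ∈ f.support, -(a : ℤ) ≤ k ∧ k ≤ (b : ℤ))
    (hcard : m * (a + b) + 1 < Nat.card ↥F)
    (hfix : ∀ x : K, x ∈ F → x ≠ 0 → laurentEval f (x ^ m) = laurentEval f x) :
    False := by
  classical
  obtain ⟨k₀, hk₀s, hk₀⟩ := hnonconst
  have hne : f.support.Nonempty := ⟨k₀, hk₀s⟩
  set q := Nat.card ↥F with hq
  have hm2 : (2:ℤ) ≤ (m:ℤ) := by exact_mod_cast hm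
  have hE1 : ∀ k ∈ f.support, (0:ℤ) ≤ (m:ℤ) * (k + a) := fun k hk => by
    have := (hsupp k hk).1
    have : (0:ℤ) ≤ k + a := by linarith
    positivity
  have hE2 : ∀ k ∈ f.support, (0:ℤ) ≤ (m:ℤ) * a + k := fun k hk => by
    have h1 := (hsupp k hk).1
    nlinarith [Int.natCast_nonneg a]
  set Q : K[X] := ∑ k ∈ f.support,
      C (f k) * (X ^ ((m:ℤ) * (k + a)).toNat - X ^ ((m:ℤ) * a + k).toNat) with hQ
  -- degree bound
  have hQdeg : Q.natDegree ≤ m * (a + b) := by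
    rw [hQ]
    apply (Polynomial.natDegree_sum_le _ _).trans
    rw [Finset.fold_max_le]
    refine ⟨Nat.zero_le _, fun k hk => ?_⟩
    have h1 := (hsupp k hk).1
    have h2 := (hsupp k hk).2
    calc (Polynomial.natDegree ∘ fun k => C (f k) *
          (X ^ ((m:ℤ) * (k + a)).toNat - X ^ ((m:ℤ) * a + k).toNat)) k
        ≤ (X ^ ((m:ℤ) * (k + a)).toNat - (X:K[X]) ^ ((m:ℤ) * a + k).toNat).natDegree :=
          Polynomial.natDegree_C_mul_le _ _
      _ ≤ max (X ^ ((m:ℤ) * (k + a)).toNat : K[X]).natDegree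
            ((X:K[X]) ^ ((m:ℤ) * a + k).toNat).natDegree := Polynomial.natDegree_sub_le _ _
      _ ≤ m * (a + b) := by
          simp only [Polynomial.natDegree_X_pow, max_le_iff]
          constructor
          · rw [Int.toNat_le]
            push_cast
            nlinarith
          · rw [Int.toNat_le]
            push_cast
            nlinarith
  -- the special exponent
  have hk₁ : ∃ k₁ ∈ f.support, ∀ k ∈ f.support, k ≠ (m:ℤ) * k₁ := by
    by_cases hB : 0 < f.support.max' hne
    · refine ⟨_, Finset.max'_mem _ hne, fun k hk hcon => ?_⟩
      have hkB := Finset.le_max' _ k hk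
      set B := f.support.max' hne
      nlinarith
    · have hk₀B := Finset.le_max' _ k₀ hk₀s
      have hk₀neg : k₀ < 0 := by omega
      have hA : f.support.min' hne < 0 := (Finset.min'_le _ k₀ hk₀s).trans_lt hk₀neg
      refine ⟨_, Finset.min'_mem _ hne, fun k hk hcon => ?_⟩
      have hkA := Finset.min'_le _ k hk
      set A := f.support.min' hne
      nlinarith
  obtain ⟨k₁, hk₁s, hk₁⟩ := hk₁
  set E : ℕ := ((m:ℤ) * (k₁ + a)).toNat with hE
  have hQcoeff : Q.coeff E = f k₁ := by
    rw [hQ, Polynomial.finset_sum_coeff]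
    rw [Finset.sum_eq_single k₁]
    · have h1 : ((m:ℤ) * (k₁ + a)).toNat = E := rfl
      have h2 : ((m:ℤ) * a + k₁).toNat ≠ E := by
        intro h
        have e1 := hE1 k₁ hk₁s
        have e2 := hE2 k₁ hk₁s
        rw [hE] at h
        have : (m:ℤ) * a + k₁ = (m:ℤ) * (k₁ + a) := by omega
        have : k₁ = (m:ℤ) * k₁ := by linarith [mul_add (m:ℤ) k₁ a]
        exact hk₁ k₁ hk₁s this
      rw [Polynomial.coeff_C_mul, Polynomial.coeff_sub, Polynomial.coeff_X_pow,
        Polynomial.coeff_X_pow, if_pos h1.symm, if_neg (Ne.symm h2)]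
      ring
    · intro k hk hkne
      have h1 : ((m:ℤ) * (k + a)).toNat ≠ E := by
        intro h
        have e1 := hE1 k hk
        have e2 := hE1 k₁ hk₁s
        rw [hE] at h
        have heq : (m:ℤ) * (k + a) = (m:ℤ) * (k₁ + a) := by omega
        have : k + (a:ℤ) = k₁ + a := by
          exact mul_left_cancel₀ (by positivity) heq
        exact hkne (by omega)
      have h2 : ((m:ℤ) * a + k).toNat ≠ E := by
        intro h
        have e1 := hE2 k hk
        have e2 := hE1 k₁ hk₁s
        rw [hE] at h
        have heq : (m:ℤ) * a + k = (m:ℤ) * (k₁ + a) := by omega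
        have : k = (m:ℤ) * k₁ := by linarith [mul_add (m:ℤ) k₁ a]
        exact hk₁ k hk this
      rw [Polynomial.coeff_C_mul, Polynomial.coeff_sub, Polynomial.coeff_X_pow,
        Polynomial.coeff_X_pow, if_neg (Ne.symm h1), if_neg (Ne.symm h2)]
      ring
    · intro h; exact absurd hk₁s h
  have hQne : Q ≠ 0 := fun h => by
    rw [h, Polynomial.coeff_zero] at hQcoeff
    exact (Finsupp.mem_support_iff.mp hk₁s) hQcoeff.symm
  -- vanishing set
  have : Fintype ↥F := Fintype.ofFinite _
  have hFfin : (F : Set K).Finite := Set.toFinite _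
  set sF : Finset K := hFfin.toFinset.erase 0 with hsF
  have hcardF : hFfin.toFinset.card = q := by
    rw [← Set.ncard_eq_toFinset_card _ hFfin, ← Nat.card_coe_set_eq, hq]
    rfl
  have hcardsF : sF.card = q - 1 := by
    rw [hsF, Finset.card_erase_of_mem (by simp [F.zero_mem]), hcardF]
  have heval : ∀ z ∈ sF, Q.eval z = 0 := by
    intro z hz
    rw [hsF, Finset.mem_erase] at hz
    obtain ⟨hz0, hzF⟩ := hz
    have hzF : z ∈ F := by simpa using hzF
    have hQz : Q.eval z = z ^ ((m:ℤ) * a) * (laurentEval f (z ^ m) - laurentEval f z) := by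
      rw [hQ, Polynomial.eval_finset_sum]
      have : laurentEval f (z ^ m) = ∑ k ∈ f.support, f k * (z ^ m) ^ k := rfl
      rw [this]
      have : laurentEval f z = ∑ k ∈ f.support, f k * z ^ k := rfl
      rw [this, mul_sub, Finset.mul_sum, Finset.mul_sum, ← Finset.sum_sub_distrib]
      refine Finset.sum_congr rfl fun k hk => ?_
      have hz1 : z ^ ((m:ℤ) * (k + a)).toNat = z ^ ((m:ℤ) * a) * (z ^ m) ^ k := by
        rw [← zpow_natCast z, Int.toNat_of_nonneg (hE1 k hk),
          (by ring : (m:ℤ) * (k + a) = (m:ℤ) * a + (m:ℤ) * k), zpow_add₀ hz0]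
        congr 1
        rw [zpow_mul, zpow_natCast]
      have hz2 : z ^ ((m:ℤ) * a + k).toNat = z ^ ((m:ℤ) * a) * z ^ k := by
        rw [← zpow_natCast z, Int.toNat_of_nonneg (hE2 k hk), zpow_add₀ hz0]
      simp only [Polynomial.eval_mul, Polynomial.eval_C, Polynomial.eval_sub,
        Polynomial.eval_pow, Polynomial.eval_X]
      rw [hz1, hz2]
      ring
    rw [hQz, hfix z hzF hz0, sub_self, mul_zero]
  have : Q = 0 := by
    apply Polynomial.eq_zero_of_natDegree_lt_card_of_eval_eq_zero' Q sF heval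
    rw [hcardsF]
    omega
  exact hQne this

/-- Let `p` be a prime and `f` a nonconstant Laurent polynomial over `𝔽_p`
(viewed inside an algebraic closure of `𝔽_p`). If `(deg_t f + deg_{t⁻¹} f)² < q = |F|` for a
finite subfield `F`, and the values of `f` on the nonzero elements of `F` all lie in a finite
subfield `F'`, then `F ⊆ F'`. -/
theorem stmt0 (p : ℕ) [Fact p.Prime]
    (f : ℤ →₀ (AlgebraicClosure (ZMod p)))
    (hcoeff : ∀ k, f k ∈ (algebraMap (ZMod p) (AlgebraicClosure (ZMod p))).range)
    (hnonconst : ∃ k ∈ f.support, k ≠ 0)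
    (F F' : Subfield (AlgebraicClosure (ZMod p)))
    [Finite ↥F] [Finite ↥F']
    (a b : ℕ)
    (hsupp : ∀ k ∈ f.support, -(a : ℤ) ≤ k ∧ k ≤ (b : ℤ))
    (hdeg : (a + b) ^ 2 < Nat.card ↥F)
    (hval : ∀ x : AlgebraicClosure (ZMod p), x ∈ F → x ≠ 0 → laurentEval f x ∈ F') :
    F ≤ F' := by
  classical
  set K := AlgebraicClosure (ZMod p) with hK
  have hp2 : 2 ≤ p := (Fact.out : p.Prime).two_le
  have instF : Fintype ↥F := Fintype.ofFinite _
  have instF' : Fintype ↥F' := Fintype.ofFinite _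
  have hFchar : CharP ↥F p := RingHom.charP F.subtype Subtype.val_injective p
  have hF'char : CharP ↥F' p := RingHom.charP F'.subtype Subtype.val_injective p
  obtain ⟨n, -, hn⟩ := FiniteField.card ↥F p
  obtain ⟨e, -, he⟩ := FiniteField.card ↥F' p
  set q := Nat.card ↥F with hq
  set q' := Nat.card ↥F' with hq'
  have hqn : q = p ^ (n : ℕ) := by rw [hq, Nat.card_eq_fintype_card, hn]
  have hq'e : q' = p ^ (e : ℕ) := by rw [hq', Nat.card_eq_fintype_card, he]
  have hq2 : 2 ≤ q := by rw [hq, Nat.card_eq_fintype_card]; exact Fintype.one_lt_card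
  -- Frobenius commutes with laurentEval (coefficients in the prime field)
  have hfrob1 : ∀ y : K, y ≠ 0 → (laurentEval f y) ^ p = laurentEval f (y ^ p) := by
    intro y hy
    have h0 : laurentEval f y = ∑ k ∈ f.support, f k * y ^ k := rfl
    rw [h0]
    calc (∑ k ∈ f.support, f k * y ^ k) ^ p
        = frobenius K p (∑ k ∈ f.support, f k * y ^ k) := (frobenius_def p _).symm
      _ = ∑ k ∈ f.support, frobenius K p (f k * y ^ k) := map_sum _ _ _
      _ = ∑ k ∈ f.support, f k * (y ^ p) ^ k := by
          refine Finset.sum_congr rfl fun k hk => ?_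
          rw [map_mul]
          congr 1
          · obtain ⟨c, hc⟩ := hcoeff k
            rw [← hc, frobenius_def, ← map_pow, ZMod.pow_card]
          · rw [frobenius_def, ← zpow_natCast (y ^ k), ← zpow_mul, mul_comm, zpow_mul,
              zpow_natCast]
      _ = laurentEval f (y ^ p) := rfl
  have hfrob : ∀ (d : ℕ) (y : K), y ≠ 0 →
      (laurentEval f y) ^ (p ^ d) = laurentEval f (y ^ (p ^ d)) := by
    intro d
    induction d with
    | zero => intro y hy; simp
    | succ d ih =>
      intro y hy
      rw [pow_succ, pow_mul, ih y hy, hfrob1 _ (pow_ne_zero _ hy), ← pow_mul, ← pow_succ]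
  -- values fixed by q'-power map
  have hfixe : ∀ x : K, x ∈ F → x ≠ 0 → laurentEval f (x ^ (p ^ (e : ℕ))) = laurentEval f x := by
    intro x hx hx0
    rw [← hfrob e x hx0]
    have hmem := hval x hx hx0
    have h := congrArg Subtype.val (FiniteField.pow_card (⟨_, hmem⟩ : ↥F'))
    simp only [SubmonoidClass.coe_pow] at h
    rwa [← he]
  -- elements of F fixed by q^t-power map
  have hfixq : ∀ x : K, x ∈ F → ∀ t : ℕ, x ^ (q ^ t) = x := by
    intro x hx t
    have h := congrArg Subtype.val (FiniteField.pow_card_pow t (⟨x, hx⟩ : ↥F))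
    simp only [SubmonoidClass.coe_pow] at h
    rwa [hq, Nat.card_eq_fintype_card]
  by_cases hdvd : (n : ℕ) ∣ e
  · -- q - 1 ∣ q' - 1, hence every element of F lies in F'
    intro x hx
    apply mem_subfield_of_pow_natCard
    rcases eq_or_ne x 0 with rfl | hx0
    · have hq'pos : 0 < q' := by rw [hq'e]; exact Nat.pow_pos (by omega)
      rw [← hq']
      exact zero_pow hq'pos.ne'
    · have h1 : (q - 1) ∣ (q' - 1) := by
        rw [hqn, hq'e]
        obtain ⟨t, ht⟩ := hdvd
        rw [ht, pow_mul]
        simpa using Nat.sub_dvd_pow_sub_pow (p ^ (n : ℕ)) 1 t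
      obtain ⟨t, ht⟩ := h1
      have hx1 : x ^ (q - 1) = 1 := by
        have hne : (⟨x, hx⟩ : ↥F) ≠ 0 := fun hcon => hx0 (congrArg Subtype.val hcon)
        have h := congrArg Subtype.val (FiniteField.pow_card_sub_one_eq_one (⟨x, hx⟩ : ↥F) hne)
        simp only [SubmonoidClass.coe_pow, OneMemClass.coe_one] at h
        rwa [hq, Nat.card_eq_fintype_card]
      have h2 : x ^ (q' - 1) = 1 := by rw [ht, pow_mul, hx1, one_pow]
      have hq'1 : 1 ≤ q' := by rw [hq'e]; exact Nat.pow_pos (by omega)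
      calc x ^ q' = x ^ (q' - 1 + 1) := by congr 1; omega
        _ = x := by rw [pow_succ, h2, one_mul]
  · -- contradiction case
    exfalso
    set e' : ℕ := e % (n : ℕ) with he'
    have hn1 : 1 ≤ (n : ℕ) := n.property
    have he'1 : 1 ≤ e' := by
      rcases Nat.eq_zero_or_pos e' with h | h
      · rw [he'] at h
        exact absurd (Nat.dvd_of_mod_eq_zero h) hdvd
      · exact h
    have he'n : e' < (n : ℕ) := Nat.mod_lt _ (by omega)
    set r : ℕ := p ^ e' with hr
    set s : ℕ := p ^ ((n : ℕ) - e') with hs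
    have hrs : r * s = q := by
      rw [hqn, hr, hs, ← pow_add]
      congr 1
      omega
    have hfixr : ∀ x : K, x ∈ F → x ≠ 0 → laurentEval f (x ^ r) = laurentEval f x := by
      intro x hx hx0
      have hpe : p ^ (e : ℕ) = q ^ ((e : ℕ) / (n : ℕ)) * r := by
        rw [hqn, hr, ← pow_mul, ← pow_add]
        congr 1
        rw [he']
        exact (Nat.div_add_mod (e : ℕ) (n : ℕ)).symm
      have hxpow : x ^ (p ^ (e : ℕ)) = x ^ r := by
        rw [hpe, pow_mul, hfixq x hx _]
      rw [← hxpow]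
      exact hfixe x hx hx0
    have hfixs : ∀ x : K, x ∈ F → x ≠ 0 → laurentEval f (x ^ s) = laurentEval f x := by
      intro x hx hx0
      have h1 := hfixr (x ^ s) (pow_mem hx s) (pow_ne_zero s hx0)
      rw [← pow_mul, mul_comm s r, hrs] at h1
      have : x ^ q = x := by simpa using hfixq x hx 1
      rw [this] at h1
      exact h1.symm
    set m : ℕ := min r s with hm
    have hm2 : 2 ≤ m := by
      rw [hm]
      have h1 : p ≤ r := by rw [hr]; exact Nat.le_self_pow (by omega) p
      have h2 : p ≤ s := by rw [hs]; exact Nat.le_self_pow (by omega) p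
      omega
    have hfixm : ∀ x : K, x ∈ F → x ≠ 0 → laurentEval f (x ^ m) = laurentEval f x := by
      rcases min_choice r s with h | h <;> rw [hm, h]
      exacts [hfixr, hfixs]
    have hmq : m ∣ q := by
      rcases min_choice r s with h | h <;> rw [hm, h, ← hrs]
      exacts [dvd_mul_right r s, dvd_mul_left s r]
    have hmm : m * m ≤ q := by
      calc m * m ≤ r * s := Nat.mul_le_mul (min_le_left r s) (min_le_right r s)
        _ = q := hrs
    have hcard : m * (a + b) + 1 < q := by
      have hab : (a + b) ^ 2 ≤ q - 1 := by omega
      have hlt : m * (a + b) < q := by nlinarith [sq_nonneg (a + b)]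
      have hne : m * (a + b) ≠ q - 1 := by
        intro hcon
        have h1 : m ∣ q - 1 := hcon ▸ dvd_mul_right m (a + b)
        have h2 : m ∣ q - (q - 1) := Nat.dvd_sub hmq h1
        rw [(by omega : q - (q - 1) = 1)] at h2
        have := Nat.le_of_dvd one_pos h2
        omega
      omega
    exact key_contra f hnonconst F a b m hm2 hsupp hcard hfixm
end

section
/- Let {G_i}_{i∈I} be a finite collection of finite groups such that: (1) each G_i is a direct sum of groups L_{ij} with L_{ij}/Z(L_{ij}) simple; (2) each G_i is perfect; (3) for i ≠ j, no simple factor of G_i/Z(G_i) is isomorphic to a simple factor of G_j/Z(G_j); (4) there is c > 0 such that every proper subgroup H_i of G_i satisfies [G_i : H_i] ≥ |G_i|^c. Then for any subgroup H of G_I := ⊕_{i∈I} G_i, one has ∏_{i∈I} [G_i : pr_i(H)] ≥ [G_I : H]^c, where pr_i is the projection to the i-th factor. -/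
/-!
Let `s` be the set of `i` with `pr_i(H) = G_i`. By a Goursat-type induction over `s`, `H` maps
onto `∏_{i ∈ s} G_i`: otherwise some `G_a` and `∏_{i ∈ t} G_i` (`a ∉ t`) would share a simple
quotient, which is perfect since `G_a` is, hence the central quotient of a factor `L_{aj}` and of
some `L_{ij'}` with `i ∈ t`, contradicting (3). Therefore `[G_I : H] ≤ ∏_{i ∉ s} |G_i|`, and (4)
bounds each `|G_i|^c` with `i ∉ s` by `[G_i : pr_i(H)]`.
-/

open Subgroup

universe u

theorem commutator_eq_top_of_surjective {G Q : Type*} [Group G] [Group Q] {f : G →* Q}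
    (hf : Function.Surjective f) (hG : commutator G = ⊤) : commutator Q = ⊤ := by
  rw [commutator_def, ← MonoidHom.range_eq_top.mpr hf, ← map_commutator_eq, hG,
    ← MonoidHom.range_eq_map]

theorem IsSimpleGroup.center_eq_bot_of_commutator_eq_top {Q : Type*} [Group Q] [IsSimpleGroup Q]
    (hQ : commutator Q = ⊤) : center Q = ⊥ :=
  (center Q).normal_of_characteristic.eq_bot_or_eq_top.resolve_right fun h =>
    bot_ne_top ((commutator_eq_bot_iff_center_eq_top Q).mpr h ▸ hQ)

theorem Subgroup.exists_isSimpleGroup_quotient_of_ne_top {G : Type*} [Group G] [Finite G]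
    {N : Subgroup G} [N.Normal] (hN : N ≠ ⊤) :
    ∃ M : Subgroup G, ∃ _ : M.Normal, N ≤ M ∧ IsSimpleGroup (G ⧸ M) := by
  obtain ⟨M, hNM, ⟨hM, hMtop⟩, hmax⟩ :=
    Finite.exists_le_maximal (p := fun M : Subgroup G => M.Normal ∧ M ≠ ⊤) ⟨‹_›, hN⟩
  have : Nontrivial (G ⧸ M) := QuotientGroup.nontrivial_iff.mpr hMtop
  refine ⟨M, hM, hNM, ⟨fun K hK => ?_⟩⟩
  have hMK : M ≤ K.comap (QuotientGroup.mk' M) := QuotientGroup.le_comap_mk' M K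
  by_cases hKtop : K.comap (QuotientGroup.mk' M) = ⊤
  · exact Or.inr (comap_injective (QuotientGroup.mk'_surjective M) (by rw [hKtop, comap_top]))
  · left
    rw [← map_comap_eq_self_of_surjective (QuotientGroup.mk'_surjective M) K,
      le_antisymm (hmax ⟨hK.comap _, hKtop⟩ hMK) hMK, QuotientGroup.map_mk'_self]

theorem MonoidHom.normal_range_mulSingle {ι : Type*} [DecidableEq ι] (K : ι → Type*)
    [∀ i, Group (K i)] (i : ι) : (MonoidHom.mulSingle K i).range.Normal where
  conj_mem := by
    rintro _ ⟨y, rfl⟩ g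
    refine ⟨g i * y * (g i)⁻¹, funext fun j => ?_⟩
    by_cases hj : j = i
    · subst hj; simp
    · simp [Pi.mulSingle_eq_of_ne hj]

theorem MonoidHom.exists_surjective_comp_mulSingle {ι : Type*} [Finite ι] [DecidableEq ι]
    {K : ι → Type*} [∀ i, Group (K i)] {Q : Type*} [Group Q] [IsSimpleGroup Q]
    (φ : (∀ i, K i) →* Q) (hφ : Function.Surjective φ) :
    ∃ i, Function.Surjective (φ.comp (MonoidHom.mulSingle K i)) := by
  by_contra! h
  have hbot (i : ι) : (φ.comp (MonoidHom.mulSingle K i)).range = ⊥ := by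
    rw [MonoidHom.range_comp]
    exact ((normal_range_mulSingle K i).map φ hφ).eq_bot_or_eq_top.resolve_right fun htop =>
      h i (MonoidHom.range_eq_top.mp (by rwa [MonoidHom.range_comp]))
  have hker (x : ∀ i, K i) : x ∈ φ.ker :=
    pi_mem_of_mulSingle_mem x fun i => by
      have : φ (Pi.mulSingle i (x i)) ∈ (φ.comp (MonoidHom.mulSingle K i)).range := ⟨x i, rfl⟩
      rwa [hbot i, mem_bot] at this
  obtain ⟨q, hq⟩ := exists_ne (1 : Q)
  obtain ⟨x, rfl⟩ := hφ q
  exact hq (hker x)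

theorem MonoidHom.exists_surjective_of_ker_le {A B C : Type*} [Group A] [Group B] [Group C]
    {f : A →* B} {g : A →* C} (hf : Function.Surjective f) (hg : Function.Surjective g)
    (hfg : f.ker ≤ g.ker) : ∃ ψ : B →* C, Function.Surjective ψ := by
  refine ⟨f.liftOfRightInverse _ (Function.rightInverse_surjInv hf) ⟨g, hfg⟩, fun c => ?_⟩
  obtain ⟨a, rfl⟩ := hg c
  exact ⟨f a, f.liftOfRightInverse_comp_apply _ _ _ a⟩

theorem nonempty_quotient_center_mulEquiv_of_surjective {G Q : Type*} [Group G] [Group Q]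
    [IsSimpleGroup (G ⧸ center G)] [IsSimpleGroup Q] (hQ : center Q = ⊥) {f : G →* Q}
    (hf : Function.Surjective f) : Nonempty ((G ⧸ center G) ≃* Q) := by
  have hZ : center G ≤ f.ker := fun z hz => by
    refine (mem_bot.mp (hQ ▸ mem_center_iff.mpr fun q => ?_) :)
    obtain ⟨g, rfl⟩ := hf q
    rw [← map_mul, ← map_mul, mem_center_iff.mp hz g]
  set f' := QuotientGroup.lift (center G) f hZ
  have hf' : Function.Surjective f' := QuotientGroup.lift_surjective_of_surjective _ f hf hZ
  refine ⟨MulEquiv.ofBijective f' ⟨?_, hf'⟩⟩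
  rw [← MonoidHom.ker_eq_bot_iff]
  refine f'.normal_ker.eq_bot_or_eq_top.resolve_right fun htop => ?_
  obtain ⟨q, hq⟩ := exists_ne (1 : Q)
  obtain ⟨x, rfl⟩ := hf' q
  exact hq (htop ▸ mem_top x : x ∈ f'.ker)

theorem exists_factor_quotient_center_mulEquiv_of_surjective {G J : Type*} [Group G] [Finite J]
    {L : J → Type*} [∀ j, Group (L j)] [∀ j, IsSimpleGroup (L j ⧸ center (L j))]
    (e : G ≃* ∀ j, L j) {Q : Type*} [Group Q] [IsSimpleGroup Q] (hQ : commutator Q = ⊤)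
    {f : G →* Q} (hf : Function.Surjective f) : ∃ j, Nonempty ((L j ⧸ center (L j)) ≃* Q) := by
  classical
  obtain ⟨j, hj⟩ :=
    (f.comp e.symm.toMonoidHom).exists_surjective_comp_mulSingle (hf.comp e.symm.surjective)
  exact ⟨j, nonempty_quotient_center_mulEquiv_of_surjective
    (IsSimpleGroup.center_eq_bot_of_commutator_eq_top hQ) hj⟩

def NoCommonSimpleQuotient (A B : Type u) [Group A] [Group B] : Prop :=
  ∀ (Q : Type u) [Group Q] [IsSimpleGroup Q] (f : A →* Q) (g : B →* Q),
    Function.Surjective f → Function.Surjective g → False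

theorem noCommonSimpleQuotient_of_mulEquiv_pi {A B : Type u} [Group A] [Group B]
    {J J' : Type*} [Finite J] [Finite J'] {L : J → Type*} {L' : J' → Type*}
    [∀ j, Group (L j)] [∀ j, Group (L' j)] [∀ j, IsSimpleGroup (L j ⧸ center (L j))]
    [∀ j, IsSimpleGroup (L' j ⧸ center (L' j))] (e : A ≃* ∀ j, L j) (e' : B ≃* ∀ j, L' j)
    (hA : commutator A = ⊤)
    (hL : ∀ j j', IsEmpty ((L j ⧸ center (L j)) ≃* (L' j' ⧸ center (L' j')))) :
    NoCommonSimpleQuotient A B := by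
  intro Q _ _ f g hf hg
  have hQ := commutator_eq_top_of_surjective hf hA
  obtain ⟨j, ⟨φ⟩⟩ := exists_factor_quotient_center_mulEquiv_of_surjective e hQ hf
  obtain ⟨j', ⟨φ'⟩⟩ := exists_factor_quotient_center_mulEquiv_of_surjective e' hQ hg
  exact (hL j j').false (φ.trans φ'.symm)

section Subdirect

variable {ι : Type*} {G : ι → Type u} [∀ i, Group (G i)] (H : Subgroup (∀ i, G i))

theorem Subgroup.surjective_pi_restrict {s : Finset ι}
    (hs : ∀ x : ∀ i, G i, ∃ h ∈ H, ∀ i ∈ s, h i = x i) :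
    Function.Surjective (MonoidHom.pi fun i : s => (Pi.evalMonoidHom G i).comp H.subtype) := by
  classical
  intro y
  obtain ⟨h, hh, hy⟩ := hs fun i => if hi : i ∈ s then y ⟨i, hi⟩ else 1
  exact ⟨⟨h, hh⟩, funext fun i => by simp [MonoidHom.pi_apply, hy i i.2]⟩

theorem Subgroup.exists_mem_forall_mem_insert_eq [DecidableEq ι] {a : ι} [Finite (G a)]
    {t : Finset ι} (hG : ∀ i ∈ t, NoCommonSimpleQuotient (G a) (G i))
    (ha : H.map (Pi.evalMonoidHom G a) = ⊤) (ht : ∀ x : ∀ i, G i, ∃ h ∈ H, ∀ i ∈ t, h i = x i)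
    (x : ∀ i, G i) : ∃ h ∈ H, ∀ i ∈ insert a t, h i = x i := by
  let ρ : H →* ∀ i : t, G i := MonoidHom.pi fun i => (Pi.evalMonoidHom G i).comp H.subtype
  let p : H →* G a := (Pi.evalMonoidHom G a).comp H.subtype
  have hρ : Function.Surjective ρ := H.surjective_pi_restrict ht
  have hp : Function.Surjective p := by
    rwa [← MonoidHom.range_eq_top, MonoidHom.range_comp, range_subtype]
  -- `ρ.ker.map p = {h a | h ∈ H, h = 1 on t}`; if it were proper, a simple quotient of
  -- `G a` by it would also be a quotient of `∏ i ∈ t, G i`.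
  have hN : ρ.ker.map p = ⊤ := by
    by_contra hN
    have := ρ.normal_ker.map p hp
    obtain ⟨M, _, hNM, _⟩ := exists_isSimpleGroup_quotient_of_ne_top hN
    have hπ := (QuotientGroup.mk'_surjective M).comp hp
    obtain ⟨ψ, hψ⟩ := MonoidHom.exists_surjective_of_ker_le hρ (g := (QuotientGroup.mk' M).comp p)
      hπ fun h hh => (QuotientGroup.eq_one_iff _).mpr (hNM ⟨h, hh, rfl⟩)
    obtain ⟨i, hi⟩ := ψ.exists_surjective_comp_mulSingle hψ
    exact hG i i.2 _ (QuotientGroup.mk' M) _ (QuotientGroup.mk'_surjective M) hi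
  obtain ⟨h, hh, hht⟩ := ht x
  obtain ⟨k, hk, hka⟩ : x a * (h a)⁻¹ ∈ ρ.ker.map p := hN ▸ mem_top _
  refine ⟨k * h, H.mul_mem k.2 hh, fun i hi => ?_⟩
  rcases Finset.mem_insert.mp hi with rfl | hi
  · change (k : ∀ i, G i) i = x i * (h i)⁻¹ at hka
    simp [hka]
  · have hki : (k : ∀ i, G i) i = 1 := congr_fun (MonoidHom.mem_ker.mp hk) ⟨i, hi⟩
    simp [hki, hht i hi]

theorem Subgroup.exists_mem_forall_mem_eq [∀ i, Finite (G i)]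
    (hG : Pairwise fun i j => NoCommonSimpleQuotient (G i) (G j)) (s : Finset ι)
    (hs : ∀ i ∈ s, H.map (Pi.evalMonoidHom G i) = ⊤) (x : ∀ i, G i) :
    ∃ h ∈ H, ∀ i ∈ s, h i = x i := by
  classical
  induction s using Finset.induction_on generalizing x with
  | empty => exact ⟨1, H.one_mem, by simp⟩
  | insert a t hat ih =>
    refine H.exists_mem_forall_mem_insert_eq (fun i hi => hG (ne_of_mem_of_not_mem hi hat).symm)
      (hs a (Finset.mem_insert_self a t)) (ih fun i hi => hs i (Finset.mem_insert_of_mem hi)) x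

theorem Subgroup.index_le_prod_card_compl [Fintype ι] [DecidableEq ι] [∀ i, Finite (G i)]
    (s : Finset ι) (hs : ∀ x : ∀ i, G i, ∃ h ∈ H, ∀ i ∈ s, h i = x i) :
    H.index ≤ ∏ i ∈ sᶜ, Nat.card (G i) := by
  have hcard : ∏ i ∈ s, Nat.card (G i) ≤ Nat.card H := by
    rw [← Finset.prod_coe_sort, ← Nat.card_pi]
    exact Nat.card_le_card_of_surjective _ (H.surjective_pi_restrict hs)
  refine Nat.le_of_mul_le_mul_right (a := H.index) ?_
    (Finset.prod_pos fun i _ => Nat.card_pos (α := G i) : 0 < ∏ i ∈ s, Nat.card (G i))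
  calc H.index * ∏ i ∈ s, Nat.card (G i) ≤ H.index * Nat.card H := Nat.mul_le_mul_left _ hcard
    _ = Nat.card (∀ i, G i) := by rw [mul_comm, card_mul_index]
    _ = (∏ i ∈ sᶜ, Nat.card (G i)) * ∏ i ∈ s, Nat.card (G i) := by
      rw [Nat.card_pi, Finset.prod_compl_mul_prod]

end Subdirect

theorem stmt3_general (I : Type*) [Fintype I]
    (G : I → Type*) [∀ i, Group (G i)] [∀ i, Fintype (G i)]
    -- (1) each `G i` decomposes as a direct sum of the almost simple groups `L i j`
    (J : I → Type*) [∀ i, Fintype (J i)]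
    (L : ∀ i, J i → Type*) [∀ i j, Group (L i j)]
    (e : ∀ i, G i ≃* (∀ j, L i j))
    (hsimple : ∀ i (j : J i), IsSimpleGroup (L i j ⧸ Subgroup.center (L i j)))
    -- (2) each `G i` is perfect
    (hperfect : ∀ i, commutator (G i) = ⊤)
    -- (3) for `i ≠ i'`, the simple factors are pairwise non-isomorphic
    (hdisj : ∀ i i', i ≠ i' → ∀ (j : J i) (j' : J i'),
      IsEmpty ((L i j ⧸ Subgroup.center (L i j)) ≃* (L i' j' ⧸ Subgroup.center (L i' j'))))
    -- (4) uniform lower bound on indices of proper subgroups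
    (c : ℝ) (hc : 0 < c)
    (hindex : ∀ i (H₀ : Subgroup (G i)), H₀ ≠ ⊤ →
      (Fintype.card (G i) : ℝ) ^ c ≤ (H₀.index : ℝ))
    (H : Subgroup (∀ i, G i)) :
    (H.index : ℝ) ^ c ≤ ∏ i, ((H.map (Pi.evalMonoidHom G i)).index : ℝ) := by
  classical
  set s := Finset.univ.filter fun i => H.map (Pi.evalMonoidHom G i) = ⊤
  have hG : Pairwise fun i j => NoCommonSimpleQuotient (G i) (G j) := fun i j hij =>
    noCommonSimpleQuotient_of_mulEquiv_pi (e i) (e j) (hperfect i) (hdisj i j hij)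
  have hidx := H.index_le_prod_card_compl s
    (H.exists_mem_forall_mem_eq hG s fun i hi => (Finset.mem_filter.mp hi).2)
  calc (H.index : ℝ) ^ c ≤ (∏ i ∈ sᶜ, (Nat.card (G i) : ℝ)) ^ c := by
        gcongr
        exact_mod_cast hidx
    _ = ∏ i ∈ sᶜ, (Fintype.card (G i) : ℝ) ^ c := by
        simp only [Nat.card_eq_fintype_card]
        exact (Real.finsetProd_rpow _ _ (fun i _ => Nat.cast_nonneg _) c).symm
    _ ≤ ∏ i ∈ sᶜ, ((H.map (Pi.evalMonoidHom G i)).index : ℝ) :=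
        Finset.prod_le_prod (fun i _ => by positivity)
          fun i hi => hindex i _ (by simpa [s] using hi)
    _ = ∏ i, ((H.map (Pi.evalMonoidHom G i)).index : ℝ) :=
        Finset.prod_subset (Finset.subset_univ _) fun i _ hi => by
          rw [(Finset.mem_filter.mp (Finset.notMem_compl.mp hi)).2, index_top, Nat.cast_one]

/-- Let `{G_i}_{i ∈ I}` be a finite collection of finite groups such that:
(1) each `G_i` is a direct sum of groups `L_{ij}` with `L_{ij}/Z(L_{ij})` simple;
(2) each `G_i` is perfect;
(3) for `i ≠ i'` no simple factor of `G_i/Z(G_i)` is isomorphic to one of `G_{i'}/Z(G_{i'})`;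
(4) there is `c > 0` with `[G_i : H_i] ≥ |G_i|^c` for every proper subgroup `H_i ≤ G_i`.
Then every subgroup `H` of `G_I = ⊕_i G_i` satisfies
`∏_i [G_i : pr_i(H)] ≥ [G_I : H]^c`. -/
theorem stmt3 (I : Type*) [Fintype I] [DecidableEq I]
    (G : I → Type*) [∀ i, Group (G i)] [∀ i, Fintype (G i)]
    -- (1) each `G i` decomposes as a direct sum of the almost simple groups `L i j`
    (J : I → Type*) [∀ i, Fintype (J i)]
    (L : ∀ i, J i → Type*) [∀ i j, Group (L i j)] [∀ i j, Fintype (L i j)]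
    (e : ∀ i, G i ≃* (∀ j, L i j))
    (hsimple : ∀ i (j : J i), IsSimpleGroup (L i j ⧸ Subgroup.center (L i j)))
    -- (2) each `G i` is perfect
    (hperfect : ∀ i, commutator (G i) = ⊤)
    -- (3) for `i ≠ i'`, the simple factors are pairwise non-isomorphic
    (hdisj : ∀ i i', i ≠ i' → ∀ (j : J i) (j' : J i'),
      IsEmpty ((L i j ⧸ Subgroup.center (L i j)) ≃* (L i' j' ⧸ Subgroup.center (L i' j'))))
    -- (4) uniform lower bound on indices of proper subgroups
    (c : ℝ) (hc : 0 < c)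
    (hindex : ∀ i (H₀ : Subgroup (G i)), H₀ ≠ ⊤ →
      (Fintype.card (G i) : ℝ) ^ c ≤ (H₀.index : ℝ))
    (H : Subgroup (∀ i, G i)) :
    (H.index : ℝ) ^ c ≤ ∏ i, ((H.map (Pi.evalMonoidHom G i)).index : ℝ) :=
  stmt3_general I G J L e hsimple hperfect hdisj c hc hindex H
end

section
/- Let {G_i}_{i∈I} be a finite family of perfect finite groups whose central quotients G_i/Z(G_i) have pairwise non-isomorphic simple factors for distinct indices (as in the Lemma on subgroup product form), and let H ≤ ⊕_{i∈I} G_i satisfy pr_i(H) = G_i for all i in a subset I₁ ⊆ I. Then pr_{I₁}(H) = ⊕_{i∈I₁} G_i. -/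
open Function

section Aux

variable {S : Type*} [Group S]

/-- A surjective hom from a finite product onto a simple group is surjective on some factor. -/
lemma exists_factor_surjective {ι : Type*} [Finite ι] [DecidableEq ι]
    (M : ι → Type*) [∀ i, Group (M i)] [hS : IsSimpleGroup S]
    (f : (∀ i, M i) →* S) (hf : Surjective f) :
    ∃ i, Surjective (f.comp (MonoidHom.mulSingle M i)) := by
  by_contra hno
  push_neg at hno
  have htriv : ∀ i (x : M i), f (Pi.mulSingle i x) = 1 := by
    intro i x
    have hN : ((f.comp (MonoidHom.mulSingle M i)).range).Normal := by
      constructor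
      rintro n ⟨x, rfl⟩ g
      obtain ⟨y, rfl⟩ := hf g
      refine ⟨y i * x * (y i)⁻¹, ?_⟩
      simp only [MonoidHom.coe_comp, comp_apply, MonoidHom.mulSingle_apply]
      rw [← map_inv, ← map_mul, ← map_mul]
      congr 1
      funext j
      by_cases hj : j = i
      · subst hj; simp
      · simp [Pi.mulSingle_eq_of_ne hj, Pi.mulSingle_eq_of_ne (M := M) hj]
    rcases hS.eq_bot_or_eq_top_of_normal _ hN with hb | ht
    · have : f (Pi.mulSingle i x) ∈ (f.comp (MonoidHom.mulSingle M i)).range := ⟨x, rfl⟩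
      rw [hb] at this
      simpa using this
    · exact absurd (MonoidHom.range_eq_top.mp ht) (hno i)
  have hone : f = 1 := MonoidHom.pi_ext fun i x => by simp [htriv i x]
  obtain ⟨a, b, hab⟩ := exists_pair_ne S
  obtain ⟨x, rfl⟩ := hf a
  obtain ⟨y, rfl⟩ := hf b
  rw [hone] at hab
  exact hab rfl

/-- A surjective hom from a quasi-simple group onto a simple nonabelian group induces an
isomorphism with the central quotient. -/
lemma iso_of_surjective_quasisimple {L : Type*} [Group L]
    (hLs : IsSimpleGroup (L ⧸ Subgroup.center L)) [hS : IsSimpleGroup S]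
    (hnc : ¬ ∀ a b : S, a * b = b * a)
    (f : L →* S) (hf : Surjective f) :
    Nonempty ((L ⧸ Subgroup.center L) ≃* S) := by
  set Z := Subgroup.center L with hZ
  have hker : (f.ker.map (QuotientGroup.mk' Z)).Normal :=
    Subgroup.Normal.map f.normal_ker _ (QuotientGroup.mk'_surjective Z)
  rcases hLs.eq_bot_or_eq_top_of_normal _ hker with hb | ht
  · -- ker f ≤ Z : get the isomorphism
    have hsub : f.ker ≤ Z := by
      intro x hx
      have : QuotientGroup.mk' Z x ∈ f.ker.map (QuotientGroup.mk' Z) := ⟨x, hx, rfl⟩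
      rw [hb, Subgroup.mem_bot] at this
      exact (QuotientGroup.eq_one_iff x).mp this
    have hsub' : f.ker ≤ Z.comap (MonoidHom.id L) := hsub
    let φ : L ⧸ f.ker →* L ⧸ Z := QuotientGroup.map f.ker Z (MonoidHom.id L) hsub'
    have hφ : Surjective φ := by
      intro q
      obtain ⟨x, rfl⟩ := QuotientGroup.mk'_surjective Z q
      exact ⟨QuotientGroup.mk x, rfl⟩
    let eK : L ⧸ f.ker ≃* S := QuotientGroup.quotientKerEquivOfSurjective f hf
    let ψ : S →* L ⧸ Z := φ.comp eK.symm.toMonoidHom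
    have hψ : Surjective ψ := hφ.comp eK.symm.surjective
    have hkψ : ψ.ker.Normal := inferInstance
    rcases hS.eq_bot_or_eq_top_of_normal _ hkψ with hkb | hkt
    · have hinj : Injective ψ := (MonoidHom.ker_eq_bot_iff ψ).mp hkb
      exact ⟨(MulEquiv.ofBijective ψ ⟨hinj, hψ⟩).symm⟩
    · -- ψ trivial: L⧸Z trivial, contradiction
      exfalso
      obtain ⟨a, b, hab⟩ := exists_pair_ne (L ⧸ Z)
      obtain ⟨a', rfl⟩ := hψ a
      obtain ⟨b', rfl⟩ := hψ b
      have ha' : a' ∈ ψ.ker := hkt ▸ Subgroup.mem_top a'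
      have hb' : b' ∈ ψ.ker := hkt ▸ Subgroup.mem_top b'
      rw [MonoidHom.mem_ker] at ha' hb'
      rw [ha', hb'] at hab
      exact hab rfl
  · -- ker f * Z = L : S abelian, contradiction
    exfalso
    apply hnc
    have key : ∀ x : L, ∃ z ∈ Z, f z = f x := by
      intro x
      have : QuotientGroup.mk' Z x ∈ f.ker.map (QuotientGroup.mk' Z) := by
        rw [ht]; trivial
      obtain ⟨k, hk, hkx⟩ := this
      have hzx : k⁻¹ * x ∈ Z := by
        simp only [QuotientGroup.mk'_apply] at hkx
        exact QuotientGroup.eq.mp hkx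
      refine ⟨k⁻¹ * x, hzx, ?_⟩
      have hk1 : f k = 1 := by simpa [MonoidHom.mem_ker] using hk
      rw [map_mul, map_inv, hk1]
      simp
    intro a b
    obtain ⟨x, rfl⟩ := hf a
    obtain ⟨y, rfl⟩ := hf b
    obtain ⟨z, hz, hzf⟩ := key x
    obtain ⟨w, hw, hwf⟩ := key y
    rw [← hzf, ← hwf, ← map_mul, ← map_mul]
    congr 1
    exact (Subgroup.mem_center_iff.mp hz w).symm

end Aux

section Aux2

variable {S : Type*} [Group S]

/-- A surjective hom from a finite product of quasi-simple groups onto a simple nonabelian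
group identifies `S` with one of the simple factors. -/
lemma exists_iso_simple_factor {J : Type*} [Finite J]
    (L : J → Type*) [∀ j, Group (L j)]
    (hsimple : ∀ j, IsSimpleGroup (L j ⧸ Subgroup.center (L j)))
    [IsSimpleGroup S] (hnc : ¬ ∀ a b : S, a * b = b * a)
    (f : (∀ j, L j) →* S) (hf : Surjective f) :
    ∃ j, Nonempty ((L j ⧸ Subgroup.center (L j)) ≃* S) := by
  classical
  obtain ⟨j, hj⟩ := exists_factor_surjective L f hf
  exact ⟨j, iso_of_surjective_quasisimple (hsimple j) hnc _ hj⟩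

/-- A nontrivial finite perfect group has a simple nonabelian quotient. -/
lemma exists_simple_nonabelian_quotient {Q : Type*} [Group Q] [Finite Q]
    (hQ : commutator Q = ⊤) (hnt : Nontrivial Q) :
    ∃ N : Subgroup Q, ∃ _ : N.Normal, IsSimpleGroup (Q ⧸ N) ∧ ¬ ∀ a b : Q ⧸ N, a * b = b * a := by
  haveI : Finite (Subgroup Q) :=
    Finite.of_injective (fun N : Subgroup Q => (N : Set Q)) SetLike.coe_injective
  set s : Set (Subgroup Q) := {N | N.Normal ∧ N ≠ ⊤} with hs
  have hbot : (⊥ : Subgroup Q) ∈ s := by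
    refine ⟨inferInstance, fun h => ?_⟩
    obtain ⟨x, y, hxy⟩ := hnt
    have hx : x ∈ (⊥ : Subgroup Q) := h ▸ Subgroup.mem_top x
    have hy : y ∈ (⊥ : Subgroup Q) := h ▸ Subgroup.mem_top y
    rw [Subgroup.mem_bot] at hx hy
    exact hxy (hx.trans hy.symm)
  obtain ⟨N, hNs, hmax⟩ := Set.Finite.exists_maximalFor id s (Set.toFinite s) ⟨⊥, hbot⟩
  haveI hNn : N.Normal := hNs.1
  have hNne : N ≠ ⊤ := hNs.2
  haveI : Nontrivial (Q ⧸ N) := by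
    obtain ⟨x, hx⟩ : ∃ x, x ∉ N := by
      by_contra h; push_neg at h
      exact hNne ((Subgroup.eq_top_iff' N).mpr h)
    exact ⟨⟨QuotientGroup.mk x, 1, fun h => hx ((QuotientGroup.eq_one_iff x).mp h)⟩⟩
  haveI hsimp : IsSimpleGroup (Q ⧸ N) := by
    constructor
    intro P hP
    have hP' : (P.comap (QuotientGroup.mk' N)).Normal := hP.comap _
    have hNle : N ≤ P.comap (QuotientGroup.mk' N) := by
      intro x hx
      have h1 : QuotientGroup.mk' N x = 1 := (QuotientGroup.eq_one_iff x).mpr hx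
      rw [Subgroup.mem_comap, h1]
      exact P.one_mem
    by_cases htop : P.comap (QuotientGroup.mk' N) = ⊤
    · right
      have h2 := Subgroup.map_comap_eq_self_of_surjective (QuotientGroup.mk'_surjective N) P
      rw [← h2, htop]
      exact Subgroup.map_top_of_surjective _ (QuotientGroup.mk'_surjective N)
    · left
      have h3 : N = P.comap (QuotientGroup.mk' N) := le_antisymm hNle (hmax ⟨hP', htop⟩ hNle)
      have hPmap := Subgroup.map_comap_eq_self_of_surjective (QuotientGroup.mk'_surjective N) P
      rw [← hPmap, ← h3]
      refine le_antisymm ?_ bot_le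
      rintro y ⟨x, hx, rfl⟩
      simpa [Subgroup.mem_bot] using (QuotientGroup.eq_one_iff x).mpr hx
  refine ⟨N, hNn, hsimp, ?_⟩
  intro hcomm
  have hperf : commutator (Q ⧸ N) = ⊤ := by
    have h1 : Subgroup.map (QuotientGroup.mk' N) (commutator Q) = commutator (Q ⧸ N) := by
      rw [commutator_def, commutator_def, Subgroup.map_commutator,
        Subgroup.map_top_of_surjective _ (QuotientGroup.mk'_surjective N)]
    rw [← h1, hQ, Subgroup.map_top_of_surjective _ (QuotientGroup.mk'_surjective N)]
  have hb : commutator (Q ⧸ N) ≤ ⊥ := by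
    rw [commutator_def, Subgroup.commutator_le]
    intro g₁ _ g₂ _
    rw [Subgroup.mem_bot, commutatorElement_def, hcomm g₁ g₂]
    group
  rw [hperf] at hb
  obtain ⟨a, b, hab⟩ := exists_pair_ne (Q ⧸ N)
  have ha := hb (Subgroup.mem_top a)
  have hbb := hb (Subgroup.mem_top b)
  rw [Subgroup.mem_bot] at ha hbb
  exact hab (ha.trans hbb.symm)

end Aux2

/-- Let `{G_i}` be finite perfect groups, each a direct sum of groups
`L_{ij}` with `L_{ij}/Z(L_{ij})` simple, such that for `i ≠ i'` the simple factors of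
`G_i/Z(G_i)` and `G_{i'}/Z(G_{i'})` are pairwise non-isomorphic.  If `H ≤ ⊕_i G_i`
satisfies `pr_i(H) = G_i` for all `i` in a subset `I₁`, then `pr_{I₁}(H) = ⊕_{i ∈ I₁} G_i`. -/
theorem stmt4 (I : Type*) [Fintype I] [DecidableEq I]
    (G : I → Type*) [∀ i, Group (G i)] [∀ i, Fintype (G i)]
    (J : I → Type*) [∀ i, Fintype (J i)]
    (L : ∀ i, J i → Type*) [∀ i j, Group (L i j)] [∀ i j, Fintype (L i j)]
    (e : ∀ i, G i ≃* (∀ j, L i j))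
    (hsimple : ∀ i (j : J i), IsSimpleGroup (L i j ⧸ Subgroup.center (L i j)))
    (hperfect : ∀ i, commutator (G i) = ⊤)
    (hdisj : ∀ i i', i ≠ i' → ∀ (j : J i) (j' : J i'),
      IsEmpty ((L i j ⧸ Subgroup.center (L i j)) ≃* (L i' j' ⧸ Subgroup.center (L i' j'))))
    (H : Subgroup (∀ i, G i))
    (I₁ : Set I)
    (hproj : ∀ i ∈ I₁, H.map (Pi.evalMonoidHom G i) = ⊤) :
    H.map (Pi.monoidHom fun i : I₁ => Pi.evalMonoidHom G (i : I)) = ⊤ := by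
  classical
  suffices key : ∀ S : Set I, (∀ i ∈ S, H.map (Pi.evalMonoidHom G i) = ⊤) →
      ∀ g : ∀ i, G i, ∃ h ∈ H, ∀ i ∈ S, h i = g i by
    rw [eq_top_iff]
    rintro x -
    obtain ⟨h, hH, hval⟩ := key I₁ hproj (fun i => if hi : i ∈ I₁ then x ⟨i, hi⟩ else 1)
    refine ⟨h, hH, ?_⟩
    funext i
    have hv := hval i i.2
    show h (i : I) = x i
    rw [hv, dif_pos i.2]
  intro S
  refine Set.Finite.induction_on S (Set.toFinite S) ?_ ?_
  · intro _ g
    exact ⟨1, H.one_mem, fun i hi => (Set.notMem_empty i hi).elim⟩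
  · rintro a S' haS hfin IH hSproj g
    have hprojA : ∀ x : G a, ∃ h ∈ H, h a = x := by
      intro x
      have htop := hSproj a (Set.mem_insert a S')
      have hx : x ∈ H.map (Pi.evalMonoidHom G a) := htop ▸ Subgroup.mem_top x
      obtain ⟨h, hh, rfl⟩ := hx
      exact ⟨h, hh, rfl⟩
    have hIH : ∀ g : ∀ i, G i, ∃ h ∈ H, ∀ i ∈ S', h i = g i :=
      IH fun i hi => hSproj i (Set.mem_insert_of_mem a hi)
    set T : Subgroup (∀ i, G i) := Subgroup.pi S' (fun _ => ⊥) with hT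
    set N : Subgroup (G a) := Subgroup.map (Pi.evalMonoidHom G a) (H ⊓ T) with hNdef
    have hmemN : ∀ x : G a, x ∈ N ↔ ∃ h ∈ H, h a = x ∧ ∀ i ∈ S', h i = 1 := by
      intro x
      constructor
      · rintro ⟨h, hh, rfl⟩
        have hh' : h ∈ H ⊓ T := hh
        rw [Subgroup.mem_inf] at hh'
        refine ⟨h, hh'.1, rfl, fun i hi => ?_⟩
        have := (Subgroup.mem_pi S').mp hh'.2 i hi
        simpa using this
      · rintro ⟨h, hh, rfl, hS1⟩
        refine ⟨h, Subgroup.mem_inf.mpr ⟨hh, (Subgroup.mem_pi S').mpr fun i hi => ?_⟩, rfl⟩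
        simp [hS1 i hi]
    have hNnormal : N.Normal := by
      constructor
      intro x hx y
      obtain ⟨h, hh, ha, h1⟩ := (hmemN x).mp hx
      obtain ⟨hy, hhy, hya⟩ := hprojA y
      refine (hmemN _).mpr ⟨hy * h * hy⁻¹,
        H.mul_mem (H.mul_mem hhy hh) (H.inv_mem hhy), ?_, ?_⟩
      · simp [ha, hya]
      · intro i hi
        simp [h1 i hi]
    haveI := hNnormal
    have hNtop : N = ⊤ := by
      by_contra hNne
      haveI : Nontrivial (G a ⧸ N) := by
        obtain ⟨x, hx⟩ : ∃ x, x ∉ N := by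
          by_contra hc; push_neg at hc
          exact hNne ((Subgroup.eq_top_iff' N).mpr hc)
        exact ⟨⟨QuotientGroup.mk x, 1, fun hxx => hx ((QuotientGroup.eq_one_iff x).mp hxx)⟩⟩
      have hQperf : commutator (G a ⧸ N) = ⊤ := by
        have h1 : Subgroup.map (QuotientGroup.mk' N) (commutator (G a)) =
            commutator (G a ⧸ N) := by
          rw [commutator_def, commutator_def, Subgroup.map_commutator,
            Subgroup.map_top_of_surjective _ (QuotientGroup.mk'_surjective N)]
        rw [← h1, hperfect a, Subgroup.map_top_of_surjective _ (QuotientGroup.mk'_surjective N)]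
      obtain ⟨M, hMn, hMsimp, hMnc⟩ := exists_simple_nonabelian_quotient hQperf this
      haveI := hMn
      haveI := hMsimp
      let π : G a →* (G a ⧸ N) ⧸ M := (QuotientGroup.mk' M).comp (QuotientGroup.mk' N)
      have hπ : Function.Surjective π :=
        (QuotientGroup.mk'_surjective M).comp (QuotientGroup.mk'_surjective N)
      obtain ⟨j₀, ⟨e₀⟩⟩ := exists_iso_simple_factor (L a) (hsimple a) hMnc
        (π.comp (e a).symm.toMonoidHom) (hπ.comp (e a).symm.surjective)
      haveI : Fintype ↥S' := hfin.fintype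
      let ρ : H →* (∀ i : S', G i) :=
        (Pi.monoidHom fun i : S' => Pi.evalMonoidHom G (i : I)).comp H.subtype
      have hρ : Function.Surjective ρ := by
        intro g'
        obtain ⟨h, hh, hval⟩ := hIH (fun i => if hi : i ∈ S' then g' ⟨i, hi⟩ else 1)
        refine ⟨⟨h, hh⟩, ?_⟩
        funext i
        have hv := hval i i.2
        show h (i : I) = g' i
        rw [hv, dif_pos i.2]
      let θ : H →* (G a ⧸ N) ⧸ M := π.comp ((Pi.evalMonoidHom G a).comp H.subtype)
      have hθ : Function.Surjective θ := by
        intro s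
        obtain ⟨x, rfl⟩ := hπ s
        obtain ⟨h, hh, ha⟩ := hprojA x
        exact ⟨⟨h, hh⟩, congrArg π ha⟩
      have hle : ρ.ker ≤ θ.ker := by
        rintro ⟨h, hh⟩ hker
        have h1 : ∀ i ∈ S', h i = 1 := by
          intro i hi
          have hk1 : ρ ⟨h, hh⟩ = 1 := hker
          exact congrFun hk1 ⟨i, hi⟩
        have hNa : h a ∈ N := (hmemN _).mpr ⟨h, hh, rfl, h1⟩
        have hmk : QuotientGroup.mk' N (h a) = 1 := (QuotientGroup.eq_one_iff _).mpr hNa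
        show π (h a) = 1
        show QuotientGroup.mk' M (QuotientGroup.mk' N (h a)) = 1
        rw [hmk, map_one]
      let ψ' : (↥H ⧸ ρ.ker) →* (G a ⧸ N) ⧸ M :=
        QuotientGroup.lift ρ.ker θ hle
      let eρ : (↥H ⧸ ρ.ker) ≃* (∀ i : S', G i) :=
        QuotientGroup.quotientKerEquivOfSurjective ρ hρ
      let ψ : (∀ i : S', G i) →* (G a ⧸ N) ⧸ M := ψ'.comp eρ.symm.toMonoidHom
      have hψ : Function.Surjective ψ := by
        have hψ' : Function.Surjective ψ' := by
          intro s
          obtain ⟨h, rfl⟩ := hθ s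
          exact ⟨QuotientGroup.mk h, rfl⟩
        exact hψ'.comp eρ.symm.surjective
      obtain ⟨i, hi⟩ := exists_factor_surjective (fun i : S' => G (i : I)) ψ hψ
      obtain ⟨j, ⟨e₁⟩⟩ := exists_iso_simple_factor (L (i : I)) (hsimple (i : I)) hMnc
        ((ψ.comp (MonoidHom.mulSingle (fun i : S' => G (i : I)) i)).comp
          (e (i : I)).symm.toMonoidHom)
        (hi.comp (e (i : I)).symm.surjective)
      have hne : a ≠ (i : I) := by
        rintro rfl
        exact haS i.2
      exact (hdisj a (i : I) hne j₀ j).false (e₀.trans e₁.symm)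
    obtain ⟨h₂, hh₂, hval₂⟩ := hIH g
    have hx : g a * (h₂ a)⁻¹ ∈ N := hNtop ▸ Subgroup.mem_top _
    obtain ⟨h₁, hh₁, h₁a, h₁S⟩ := (hmemN _).mp hx
    refine ⟨h₁ * h₂, H.mul_mem hh₁ hh₂, ?_⟩
    intro i hi
    rcases Set.mem_insert_iff.mp hi with rfl | hiS
    · show h₁ i * h₂ i = g i
      rw [h₁a]
      group
    · show h₁ i * h₂ i = g i
      rw [h₁S i hiS, one_mul, hval₂ i hiS]
end

section
/- Let G be a finite group, L a positive integer, ν a probability measure on G, and 0 < p, p′ < 1 with p′ > √(2Lp). Let 𝓗 be a family of subgroups of G with the property that for any two distinct H, H′ ∈ 𝓗 one has ν̃ ∗ ν(H ∩ H′) ≤ Lp (for instance because every coset of H ∩ H′ has ν-measure at most Lp). Define E := {H ∈ 𝓗 : ν̃ ∗ ν(H) > p′}. Then |E| < √(2/(L p p′)). -/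
lemma ptwise {G : Type*} [Group G] [Fintype G] [DecidableEq (Subgroup G)]
    (S : Finset (Subgroup G)) (x : G) (c : ℝ) (hc : 0 ≤ c) :
    ∑ H ∈ S, Set.indicator (H : Set G) (fun _ => c) x
      ≤ c + (1/2) * ∑ q ∈ S.offDiag,
          Set.indicator ((q.1 ⊓ q.2 : Subgroup G) : Set G) (fun _ => c) x := by
  classical
  set T := S.filter (fun H => x ∈ H) with hT
  have h1 : ∑ H ∈ S, Set.indicator (H : Set G) (fun _ => c) x = T.card * c := by
    simp only [Set.indicator_apply, SetLike.mem_coe]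
    rw [← Finset.sum_filter, Finset.sum_const, nsmul_eq_mul]
  have h2 : ∑ q ∈ S.offDiag,
      Set.indicator ((q.1 ⊓ q.2 : Subgroup G) : Set G) (fun _ => c) x
      = T.offDiag.card * c := by
    simp only [Set.indicator_apply, SetLike.mem_coe, Subgroup.mem_inf]
    rw [← Finset.sum_filter, Finset.sum_const, nsmul_eq_mul]
    have : S.offDiag.filter (fun q => x ∈ q.1 ∧ x ∈ q.2) = T.offDiag := by
      ext q
      simp only [Finset.mem_filter, Finset.mem_offDiag, hT]
      tauto
    rw [this]
  rw [h1, h2, Finset.offDiag_card]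
  set d := T.card with hd
  have hdd : d ≤ d * d := by
    rcases Nat.eq_zero_or_pos d with h | h
    · simp [h]
    · exact Nat.le_mul_of_pos_left d h
  rw [Nat.cast_sub hdd]
  push_cast
  have hd2 : (d:ℝ) ≤ (d:ℝ) * d := by exact_mod_cast hdd
  rcases le_or_gt d 1 with h | h
  · have : (d:ℝ) ≤ 1 := by exact_mod_cast h
    nlinarith [mul_nonneg hc (sub_nonneg.mpr this), mul_nonneg hc (sub_nonneg.mpr hd2)]
  · have h2' : (2:ℝ) ≤ d := by exact_mod_cast h
    nlinarith [mul_nonneg (mul_nonneg (sub_nonneg.mpr (by linarith : (1:ℝ) ≤ d)) (sub_nonneg.mpr h2')) hc]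


/-- `(ν̃ ∗ ν)(A) = Σ_{a, b : a⁻¹ b ∈ A} ν(a) ν(b)` for a subset `A` of a finite group. -/
noncomputable def convMassSet {G : Type*} [Group G] [Fintype G]
    (ν : G → ℝ) (A : Set G) : ℝ :=
  ∑ a, ∑ b, A.indicator (fun _ => ν a * ν b) (a⁻¹ * b)

lemma inclexcl {G : Type*} [Group G] [Fintype G] [DecidableEq (Subgroup G)]
    (ν : G → ℝ) (hν : ∀ g, 0 ≤ ν g) (hν1 : ∑ g, ν g = 1)
    (S : Finset (Subgroup G)) :
    ∑ H ∈ S, convMassSet ν (H : Set G)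
      ≤ 1 + (1/2) * ∑ q ∈ S.offDiag,
          convMassSet ν ((q.1 ⊓ q.2 : Subgroup G) : Set G) := by
  classical
  unfold convMassSet
  have swap : ∀ (f : Subgroup G → Set G),
      ∑ H ∈ S, ∑ a : G, ∑ b : G, (f H).indicator (fun _ => ν a * ν b) (a⁻¹ * b)
      = ∑ a : G, ∑ b : G, ∑ H ∈ S, (f H).indicator (fun _ => ν a * ν b) (a⁻¹ * b) := by
    intro f
    rw [Finset.sum_comm]
    exact Finset.sum_congr rfl fun a _ => Finset.sum_comm
  calc ∑ H ∈ S, ∑ a : G, ∑ b : G, ((H : Set G)).indicator (fun _ => ν a * ν b) (a⁻¹ * b)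
      = ∑ a : G, ∑ b : G, ∑ H ∈ S, ((H : Set G)).indicator (fun _ => ν a * ν b) (a⁻¹ * b) :=
        swap _
    _ ≤ ∑ a : G, ∑ b : G, (ν a * ν b + (1/2) * ∑ q ∈ S.offDiag,
          (((q.1 ⊓ q.2 : Subgroup G)) : Set G).indicator (fun _ => ν a * ν b) (a⁻¹ * b)) := by
        refine Finset.sum_le_sum fun a _ => Finset.sum_le_sum fun b _ => ?_
        exact ptwise S (a⁻¹ * b) (ν a * ν b) (mul_nonneg (hν a) (hν b))
    _ = 1 + (1/2) * ∑ q ∈ S.offDiag, ∑ a : G, ∑ b : G,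
          (((q.1 ⊓ q.2 : Subgroup G)) : Set G).indicator (fun _ => ν a * ν b) (a⁻¹ * b) := by
        simp only [Finset.sum_add_distrib, Finset.mul_sum]
        congr 1
        · rw [← Finset.sum_mul_sum, hν1, one_mul]
        · exact Eq.trans (Finset.sum_congr rfl fun a _ => Finset.sum_comm) Finset.sum_comm

/-- Let `G` be a finite group, `L` a positive integer, `ν` a probability
measure on `G`, `0 < p, p' < 1` with `p' > √(2Lp)`, and `𝓗` a family of subgroups such that
`ν̃ ∗ ν(H ∩ H') ≤ Lp` for all distinct `H, H' ∈ 𝓗`.  Then the set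
`E = {H ∈ 𝓗 : ν̃ ∗ ν(H) > p'}` satisfies `|E| < √(2 / (L p p'))`. -/
theorem stmt9 {G : Type*} [Group G] [Fintype G]
    (L : ℕ) (hL : 0 < L)
    (ν : G → ℝ) (hν : ∀ g, 0 ≤ ν g) (hν1 : ∑ g, ν g = 1)
    (p p' : ℝ) (hp0 : 0 < p) (hp1 : p < 1) (hp'0 : 0 < p') (hp'1 : p' < 1)
    (hpp' : Real.sqrt (2 * L * p) < p')
    (𝓗 : Finset (Subgroup G))
    (hint : ∀ H ∈ 𝓗, ∀ H' ∈ 𝓗, H ≠ H' →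
      convMassSet ν ((H ⊓ H' : Subgroup G) : Set G) ≤ L * p)
    (E : Finset (Subgroup G))
    (hE : ∀ H : Subgroup G, H ∈ E ↔ H ∈ 𝓗 ∧ p' < convMassSet ν (H : Set G)) :
    (E.card : ℝ) < Real.sqrt (2 / (L * p * p')) := by
  classical
  set a : ℝ := (L : ℝ) * p with ha_def
  have hL0 : (0:ℝ) < (L:ℝ) := by exact_mod_cast hL
  have ha : 0 < a := by positivity
  have hsq : 2 * a < p' ^ 2 := by
    have h := (Real.sqrt_lt' hp'0).mp hpp'
    rw [ha_def]; ring_nf; ring_nf at h; linarith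
  -- key inequality for subsets of E
  have key : ∀ S : Finset (Subgroup G), S ⊆ E →
      (S.card : ℝ) * p' < 1 + 1/2 * ((S.card : ℝ) * ((S.card : ℝ) - 1) * a) := by
    intro S hS
    rcases S.eq_empty_or_nonempty with rfl | hne
    · simp
    · have hlt : (S.card : ℝ) * p' < ∑ H ∈ S, convMassSet ν (H : Set G) := by
        have h0 : ∑ _H ∈ S, p' < ∑ H ∈ S, convMassSet ν (H : Set G) :=
          Finset.sum_lt_sum_of_nonempty hne (fun H hH => ((hE H).mp (hS hH)).2)
        simpa [Finset.sum_const, nsmul_eq_mul] using h0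
      have h2 := inclexcl ν hν hν1 S
      have h3 : ∑ q ∈ S.offDiag, convMassSet ν ((q.1 ⊓ q.2 : Subgroup G) : Set G)
          ≤ (S.offDiag.card : ℝ) * a := by
        have := Finset.sum_le_card_nsmul S.offDiag
          (fun q => convMassSet ν ((q.1 ⊓ q.2 : Subgroup G) : Set G)) a
          (fun q hq => by
            obtain ⟨h1', h2', h3'⟩ := Finset.mem_offDiag.mp hq
            exact hint q.1 ((hE q.1).mp (hS h1')).1 q.2 ((hE q.2).mp (hS h2')).1 h3')
        simpa [nsmul_eq_mul] using this
      have hdd : S.card ≤ S.card * S.card := by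
        rcases Nat.eq_zero_or_pos S.card with h | h
        · simp [h]
        · exact Nat.le_mul_of_pos_left _ h
      have hcard : (S.offDiag.card : ℝ) = (S.card : ℝ) * ((S.card : ℝ) - 1) := by
        rw [Finset.offDiag_card, Nat.cast_sub hdd]
        push_cast; ring
      rw [hcard] at h3
      nlinarith [hlt, h2, h3]
  -- now the arithmetic endgame
  rw [Real.lt_sqrt (by positivity : (0:ℝ) ≤ (E.card:ℝ))]
  have hx : (0:ℝ) ≤ p' / a + 1/2 := by positivity
  set k : ℕ := Nat.floor (p' / a + 1/2) with hk
  rcases le_or_gt k E.card with hcase | hcase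
  · -- case A: contradiction
    exfalso
    obtain ⟨S, hSE, hScard⟩ := Finset.exists_subset_card_eq hcase
    have hkey := key S hSE
    rw [hScard] at hkey
    set r : ℝ := (k : ℝ) with hr
    have hr1 : r ≤ p' / a + 1/2 := Nat.floor_le hx
    have hr2 : p' / a + 1/2 < r + 1 := Nat.lt_floor_add_one _
    have hu : a * r ≤ p' + a/2 := by
      have e : a * (p' / a + 1/2) = p' + a/2 := by field_simp
      calc a * r ≤ a * (p' / a + 1/2) := by nlinarith
        _ = p' + a/2 := e
    have hl : p' - a/2 < a * r := by
      have e : a * (p' / a + 1/2) = p' + a/2 := by field_simp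
      nlinarith [mul_lt_mul_of_pos_left hr2 ha]
    have hkey2 : a * (r * p') < a * (1 + 1/2 * (r * (r - 1) * a)) :=
      mul_lt_mul_of_pos_left hkey ha
    nlinarith only [hkey2, hu, hl, hsq, ha, hp'0, hp'1, mul_pos ha hp'0]
  · -- case B
    rw [lt_div_iff₀ (by positivity)]
    by_contra hcon
    push_neg at hcon
    set n : ℝ := (E.card : ℝ) with hn
    have hn0 : (0:ℝ) ≤ n := by positivity
    have hkey := key E (le_refl _)
    have hnk : n + 1 ≤ (k : ℝ) := by
      rw [hn]
      exact_mod_cast Nat.succ_le_of_lt hcase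
    have hna : a * n ≤ p' - a/2 := by
      have h1 : (k:ℝ) ≤ p' / a + 1/2 := Nat.floor_le hx
      have h2 : n ≤ p' / a - 1/2 := by linarith
      have e : a * (p' / a - 1/2) = p' - a/2 := by field_simp
      calc a * n ≤ a * (p' / a - 1/2) := mul_le_mul_of_nonneg_left h2 ha.le
        _ = p' - a/2 := e
    have hcon' : 2 ≤ n^2 * (a * p') := by
      calc (2:ℝ) ≤ n^2 * ((L:ℝ) * p * p') := hcon
        _ = n^2 * (a * p') := by rw [ha_def]
    nlinarith only [hkey, hna, hcon', hsq, ha, hp'0, hp'1, hn0,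
      mul_le_mul_of_nonneg_left hna (by linarith : (0:ℝ) ≤ 2*n),
      mul_nonneg (mul_nonneg ha.le hn0) hn0,
      mul_le_mul_of_nonneg_left hp'1.le (mul_nonneg ha.le (sq_nonneg n))]
end

section
/- Let G be a finite group and X₁, X₂, X₃ independent random variables with values in G. Suppose G is L⁻¹-quasi-random, i.e., every nontrivial complex irreducible representation of G has dimension greater than |G|^{1/L}. If (H₀(X₁) + H₀(X₂) + H₀(X₃))/3 > (1 − 1/(3L)) log|G|, then the support of X₁X₂X₃ is all of G, i.e., H₀(X₁X₂X₃) = log|G|. -/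
open Pointwise

/-- A finite group `G` is `L⁻¹`-quasi-random if every nontrivial irreducible complex
representation of `G` has dimension greater than `|G|^{1/L}`. -/
def IsQuasiRandom (L : ℕ) (G : Type) [Group G] [Fintype G] : Prop :=
  ∀ (V : Type) [AddCommGroup V] [Module ℂ V] [FiniteDimensional ℂ V]
    (ρ : Representation ℂ G V),
    (∃ g : G, ρ g ≠ LinearMap.id) →
    (∀ W : Submodule ℂ V, (∀ g : G, W.map (ρ g) ≤ W) → W = ⊥ ∨ W = ⊤) →
    (Fintype.card G : ℝ) ^ ((1 : ℝ) / L) < (Module.finrank ℂ V : ℝ)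

/-!
Suppose `x₀ ∉ ABC` and let `f = |G| • 1_B - |B|`, which has mean zero and `‖f‖² ≤ |G|² |B|`.
For `x ∈ x₀C⁻¹` no `a⁻¹x` with `a ∈ A` lies in `B`, so `(1_A ⋆ f)(x) = -|A||B|` and hence
`‖1_A ⋆ f‖² ≥ |A|²|B|²|C|`. On the other hand, for `S = 1_A ⋆ ·` let `μ` be the top eigenvalue of
`S†S` on mean-zero functions, so `‖S f‖² ≤ μ ‖f‖²`. Since `S` commutes with right translations,
the `μ`-eigenspace of mean-zero functions is a representation of `G` without invariant vectors,
so quasirandomness gives it dimension `d > |G|^{1/L}`, while `μ d ≤ tr S†S = |G||A|`.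
Together: `|A||B||C| |G|^{1/L} ≤ |G|³`.
-/

open Module Module.End Finset RCLike
open scoped InnerProductSpace

section Spectral

variable {𝕜 E F : Type*} [RCLike 𝕜] [NormedAddCommGroup E] [InnerProductSpace 𝕜 E]
  [NormedAddCommGroup F] [InnerProductSpace 𝕜 F]

theorem Orthonormal.sum_norm_sq_apply_le {ι κ : Type*} [Fintype ι] [Fintype κ] {e : κ → E}
    (he : Orthonormal 𝕜 e) {S : E → EuclideanSpace 𝕜 ι} {u : ι → E}
    (hS : ∀ x i, S x i = ⟪u i, x⟫_𝕜) : ∑ k, ‖S (e k)‖ ^ 2 ≤ ∑ i, ‖u i‖ ^ 2 :=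
  calc ∑ k, ‖S (e k)‖ ^ 2 = ∑ i, ∑ k, ‖⟪e k, u i⟫_𝕜‖ ^ 2 := by
        simp_rw [EuclideanSpace.norm_sq_eq, hS, norm_inner_symm (u _)]
        exact sum_comm
    _ ≤ ∑ i, ‖u i‖ ^ 2 := sum_le_sum fun i _ ↦ he.sum_inner_products_le (u i)

variable [FiniteDimensional 𝕜 E] [FiniteDimensional 𝕜 F]

theorem LinearMap.norm_apply_sq_eq_re_inner_adjoint_comp_self (S : E →ₗ[𝕜] F) (x : E) :
    ‖S x‖ ^ 2 = re ⟪(S.adjoint ∘ₗ S) x, x⟫_𝕜 := by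
  rw [LinearMap.comp_apply, LinearMap.adjoint_inner_left, inner_self_eq_norm_sq]

/-- `μ` is the supremum of the Rayleigh quotient of `T` restricted to `V`, an eigenvalue of that
restriction. -/
theorem LinearMap.IsSymmetric.exists_rayleigh_le_eigenspace_inf_ne_bot {T : E →ₗ[𝕜] E}
    (hT : T.IsSymmetric) {V : Submodule 𝕜 E} (hV : ∀ v ∈ V, T v ∈ V) {f : E} (hf : f ∈ V)
    (hf0 : f ≠ 0) : ∃ μ : ℝ, re ⟪T f, f⟫_𝕜 ≤ μ * ‖f‖ ^ 2 ∧ eigenspace T μ ⊓ V ≠ ⊥ := by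
  have : Nontrivial V := nontrivial_of_ne ⟨f, hf⟩ 0 (by simpa using hf0)
  set T' := T.restrict hV
  have hbdd : BddAbove (Set.range fun x : { x : V // x ≠ 0 } ↦
      re ⟪T' x, x⟫_𝕜 / ‖(x : V)‖ ^ 2) :=
    ⟨‖LinearMap.toContinuousLinearMap T'‖, by
      rintro _ ⟨x, rfl⟩
      exact (le_abs_self _).trans ((LinearMap.toContinuousLinearMap T').rayleighQuotient_le_norm x)⟩
  refine ⟨⨆ x : { x : V // x ≠ 0 }, re ⟪T' x, x⟫_𝕜 / ‖(x : V)‖ ^ 2, ?_, ?_⟩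
  · have hf' := le_ciSup hbdd ⟨⟨f, hf⟩, by simpa using hf0⟩
    rwa [div_le_iff₀ (by simp [hf0])] at hf'
  · obtain ⟨v, hv⟩ :=
      (hT.restrict_invariant hV).hasEigenvalue_iSup_of_finiteDimensional.exists_hasEigenvector
    rw [Submodule.ne_bot_iff]
    exact ⟨v, ⟨mem_eigenspace_iff.mpr (congrArg Subtype.val hv.apply_eq_smul), v.2⟩,
      by simpa using hv.2⟩

/-- `μ · dim W` is the trace of `S†S` on `W`, which is at most the Hilbert–Schmidt norm
`∑ i, ‖u i‖ ^ 2` of `S`. -/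
theorem LinearMap.mul_finrank_le_of_le_eigenspace {ι : Type*} [Fintype ι]
    (S : E →ₗ[𝕜] EuclideanSpace 𝕜 ι) {u : ι → E} (hS : ∀ x i, S x i = ⟪u i, x⟫_𝕜) {μ : ℝ}
    {W : Submodule 𝕜 E} (hW : W ≤ eigenspace (S.adjoint ∘ₗ S) μ) :
    μ * finrank 𝕜 W ≤ ∑ i, ‖u i‖ ^ 2 := by
  set b := stdOrthonormalBasis 𝕜 W
  have hb : Orthonormal 𝕜 fun k ↦ (b k : E) := b.orthonormal.comp_linearIsometry W.subtypeₗᵢ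
  have hnorm : ∀ k, ‖S (b k)‖ ^ 2 = μ := fun k ↦ by
    rw [S.norm_apply_sq_eq_re_inner_adjoint_comp_self, mem_eigenspace_iff.mp (hW (b k).2),
      inner_smul_left, conj_ofReal, re_ofReal_mul, inner_self_eq_norm_sq, hb.1 k]
    simp
  calc μ * finrank 𝕜 W = ∑ k, ‖S (b k)‖ ^ 2 := by simp [hnorm, mul_comm]
    _ ≤ ∑ i, ‖u i‖ ^ 2 := hb.sum_norm_sq_apply_le hS

end Spectral

/-- Induction on `dim W`: either `W` is irreducible, and then nontrivial because it has no nonzero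
invariant vectors, or it has a nonzero subrepresentation of smaller dimension. -/
theorem IsQuasiRandom.rpow_lt_finrank {L : ℕ} {G : Type} [Group G] [Fintype G]
    (hQR : IsQuasiRandom L G) {V : Type} [AddCommGroup V] [Module ℂ V] [FiniteDimensional ℂ V]
    {ρ : Representation ℂ G V} (W : Subrepresentation ρ) (hW : W.toSubmodule ≠ ⊥)
    (hfix : Disjoint W.toSubmodule ρ.invariants) :
    (Fintype.card G : ℝ) ^ ((1 : ℝ) / L) < finrank ℂ W.toSubmodule := by
  induction hd : finrank ℂ W.toSubmodule using Nat.strong_induction_on generalizing W with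
  | _ d ih =>
    by_cases hirr : ∀ X : Submodule ℂ W.toSubmodule,
        (∀ g, X.map (W.toRepresentation g) ≤ X) → X = ⊥ ∨ X = ⊤
    · rw [← hd]
      refine hQR _ W.toRepresentation ?_ hirr
      by_contra! htriv
      obtain ⟨v, hv, hv0⟩ := W.toSubmodule.ne_bot_iff.mp hW
      exact hv0 (hfix.le_bot
        ⟨hv, fun g ↦ congrArg Subtype.val (LinearMap.congr_fun (htriv g) ⟨v, hv⟩)⟩)
    push Not at hirr
    obtain ⟨X, hXinv, hXbot, hXtop⟩ := hirr
    let W' : Subrepresentation ρ := ⟨X.map W.toSubmodule.subtype, by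
      rintro g _ ⟨x, hx, rfl⟩
      exact ⟨W.toRepresentation g x, hXinv g ⟨x, hx, rfl⟩, rfl⟩⟩
    have hW'W : W'.toSubmodule ≤ W.toSubmodule := Submodule.map_subtype_le _ _
    have hrank : finrank ℂ W'.toSubmodule = finrank ℂ X := Submodule.finrank_map_subtype_eq _ _
    have hlt : finrank ℂ W'.toSubmodule < d := hrank ▸ hd ▸ Submodule.finrank_lt hXtop
    have hW' : W'.toSubmodule ≠ ⊥ := by
      rwa [Ne, ← Submodule.map_bot W.toSubmodule.subtype,
        (Submodule.map_injective_of_injective W.toSubmodule.injective_subtype).eq_iff]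
    exact (ih _ hlt W' hW' (hfix.mono_left hW'W) rfl).trans (by exact_mod_cast hlt)

section Convolution

variable {𝕜 G : Type*} [RCLike 𝕜]

section Group

variable [Group G]

def leftConv (A : Finset G) : EuclideanSpace 𝕜 G →ₗ[𝕜] EuclideanSpace 𝕜 G where
  toFun f := WithLp.toLp 2 fun x ↦ ∑ a ∈ A, f (a⁻¹ * x)
  map_add' f g := by ext; simp [sum_add_distrib]
  map_smul' c f := by ext; simp [mul_sum]

@[simp]
theorem leftConv_apply (A : Finset G) (f : EuclideanSpace 𝕜 G) (x : G) :
    leftConv A f x = ∑ a ∈ A, f (a⁻¹ * x) :=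
  rfl

variable (𝕜) in
def rightReg : Representation 𝕜 G (EuclideanSpace 𝕜 G) where
  toFun g :=
    { toFun f := WithLp.toLp 2 fun x ↦ f (x * g)
      map_add' _ _ := rfl
      map_smul' _ _ := rfl }
  map_one' := by ext f x; exact congrArg f.ofLp (mul_one x)
  map_mul' g h := by ext f x; exact congrArg f.ofLp (mul_assoc x g h).symm

@[simp]
theorem rightReg_apply (g : G) (f : EuclideanSpace 𝕜 G) (x : G) :
    rightReg 𝕜 g f x = f (x * g) :=
  rfl

theorem leftConv_rightReg (A : Finset G) (g : G) (f : EuclideanSpace 𝕜 G) :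
    leftConv A (rightReg 𝕜 g f) = rightReg 𝕜 g (leftConv A f) := by
  ext; simp [mul_assoc]

end Group

section Fintype

variable [Fintype G]

variable (𝕜 G) in
def meanZero : Submodule 𝕜 (EuclideanSpace 𝕜 G) where
  carrier := {f | ∑ x, f x = 0}
  add_mem' := by simp_all [sum_add_distrib]
  zero_mem' := by simp
  smul_mem' := by simp_all [← mul_sum]

theorem mem_meanZero {f : EuclideanSpace 𝕜 G} : f ∈ meanZero 𝕜 G ↔ ∑ x, f x = 0 :=
  Iff.rfl

variable [DecidableEq G]

def indicatorVec (s : Finset G) : EuclideanSpace 𝕜 G :=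
  WithLp.toLp 2 fun x ↦ if x ∈ s then 1 else 0

theorem inner_indicatorVec_left (s : Finset G) (f : EuclideanSpace 𝕜 G) :
    ⟪indicatorVec s, f⟫_𝕜 = ∑ x ∈ s, f x := by
  simp [PiLp.inner_apply, indicatorVec, apply_ite, sum_ite_mem]

theorem norm_sq_indicatorVec (s : Finset G) :
    ‖(indicatorVec s : EuclideanSpace 𝕜 G)‖ ^ 2 = #s := by
  simp [EuclideanSpace.norm_sq_eq, indicatorVec, apply_ite]

def balancedIndicator (B : Finset G) : EuclideanSpace 𝕜 G :=
  (Fintype.card G : 𝕜) • indicatorVec B - (#B : 𝕜) • indicatorVec univ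

theorem balancedIndicator_mem_meanZero (B : Finset G) :
    (balancedIndicator B : EuclideanSpace 𝕜 G) ∈ meanZero 𝕜 G := by
  simp [mem_meanZero, balancedIndicator, indicatorVec, sum_sub_distrib, mul_comm]

/-- Pythagoras: `|G| • 1_B` is the sum of `balancedIndicator B` and a constant orthogonal to it. -/
theorem norm_sq_balancedIndicator_le (B : Finset G) :
    ‖(balancedIndicator B : EuclideanSpace 𝕜 G)‖ ^ 2 ≤ (Fintype.card G : ℝ) ^ 2 * #B := by
  set u : EuclideanSpace 𝕜 G := (#B : 𝕜) • indicatorVec univ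
  have horth : ⟪(balancedIndicator B : EuclideanSpace 𝕜 G), u⟫_𝕜 = 0 := by
    rw [inner_smul_right, ← inner_conj_symm, inner_indicatorVec_left,
      mem_meanZero.mp (balancedIndicator_mem_meanZero B)]
    simp
  have hsplit : balancedIndicator B + u = (Fintype.card G : 𝕜) • indicatorVec B :=
    sub_add_cancel _ _
  have hpyth := norm_add_sq_eq_norm_sq_add_norm_sq_of_inner_eq_zero _ _ horth
  rw [hsplit, norm_smul, RCLike.norm_natCast] at hpyth
  have hB := norm_sq_indicatorVec (𝕜 := 𝕜) B
  nlinarith [mul_self_nonneg ‖u‖]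

end Fintype

variable [Group G] [Fintype G]

theorem rightReg_mem_meanZero (g : G) {f : EuclideanSpace 𝕜 G} (hf : f ∈ meanZero 𝕜 G) :
    rightReg 𝕜 g f ∈ meanZero 𝕜 G :=
  (Equiv.sum_comp (Equiv.mulRight g) (f ·)).trans hf

theorem leftConv_mem_meanZero (A : Finset G) {f : EuclideanSpace 𝕜 G} (hf : f ∈ meanZero 𝕜 G) :
    leftConv A f ∈ meanZero 𝕜 G := by
  rw [mem_meanZero]
  simp only [leftConv_apply]
  rw [sum_comm]
  exact sum_eq_zero fun a _ ↦ (Equiv.sum_comp (Equiv.mulLeft a⁻¹) (f ·)).trans hf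

theorem disjoint_meanZero_invariants :
    Disjoint (meanZero 𝕜 G) (rightReg 𝕜 (G := G)).invariants := by
  rw [Submodule.disjoint_def]
  intro f hf hfix
  have hconst : ∀ x, f x = f 1 := fun x ↦ by simpa using congrArg (· 1) (hfix x)
  have hf1 : (Fintype.card G : 𝕜) * f 1 = 0 := by simpa [hconst, mem_meanZero] using hf
  ext x
  simpa [hconst x] using hf1

variable [DecidableEq G]

theorem leftConv_apply_eq_inner (A : Finset G) (f : EuclideanSpace 𝕜 G) (x : G) :
    leftConv A f x = ⟪indicatorVec (A.image (·⁻¹ * x)), f⟫_𝕜 := by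
  rw [inner_indicatorVec_left, sum_image (by simp), leftConv_apply]

theorem adjoint_leftConv (A : Finset G) :
    (leftConv A : EuclideanSpace 𝕜 G →ₗ[𝕜] _).adjoint = leftConv A⁻¹ := by
  refine ((LinearMap.eq_adjoint_iff _ _).mpr fun f g ↦ ?_).symm
  simp only [PiLp.inner_apply, leftConv_apply, sum_inv_index, inv_inv, sum_inner, inner_sum]
  rw [sum_comm, sum_comm (s := univ)]
  refine sum_congr rfl fun a _ ↦ ?_
  simpa using Equiv.sum_comp (Equiv.mulLeft a) fun y ↦ ⟪f y, g (a⁻¹ * y)⟫_𝕜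

theorem leftConv_balancedIndicator_apply {A B : Finset G} {x : G} (hx : ∀ a ∈ A, a⁻¹ * x ∉ B) :
    leftConv A (balancedIndicator B : EuclideanSpace 𝕜 G) x = -(#A * #B) := by
  simp [balancedIndicator, indicatorVec, filter_eq_empty_iff.mpr hx, mul_comm]

theorem sq_mul_card_le_norm_sq_leftConv_balancedIndicator {A B C : Finset G} {x₀ : G}
    (hx₀ : x₀ ∉ A * B * C) :
    ((#A * #B) ^ 2 * #C : ℝ) ≤ ‖leftConv A (balancedIndicator B : EuclideanSpace 𝕜 G)‖ ^ 2 := by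
  set D := C.image (x₀ * ·⁻¹)
  have hD : ∀ x ∈ D, ∀ a ∈ A, a⁻¹ * x ∉ B := by
    simp only [D, mem_image]
    rintro _ ⟨c, hc, rfl⟩ a ha hb
    exact hx₀ (by simpa [mul_assoc] using mul_mem_mul (mul_mem_mul ha hb) hc)
  calc ((#A * #B) ^ 2 * #C : ℝ)
      = ∑ x ∈ D, ‖leftConv A (balancedIndicator B : EuclideanSpace 𝕜 G) x‖ ^ 2 := by
        rw [sum_congr rfl fun x hx ↦ by rw [leftConv_balancedIndicator_apply (hD x hx)],
          sum_const, card_image_of_injective _ (by simp [Function.Injective])]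
        simp [mul_comm]
    _ ≤ ‖leftConv A (balancedIndicator B : EuclideanSpace 𝕜 G)‖ ^ 2 := by
        rw [EuclideanSpace.norm_sq_eq]
        exact sum_le_univ_sum_of_nonneg fun _ ↦ sq_nonneg _

end Convolution

section QuasiRandom

variable {L : ℕ} {G : Type} [Group G] [Fintype G]

theorem IsQuasiRandom.norm_sq_leftConv_mul_rpow_le (hQR : IsQuasiRandom L G) (A : Finset G)
    {f : EuclideanSpace ℂ G} (hf : f ∈ meanZero ℂ G) :
    ‖leftConv A f‖ ^ 2 * (Fintype.card G : ℝ) ^ ((1 : ℝ) / L) ≤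
      Fintype.card G * #A * ‖f‖ ^ 2 := by
  classical
  rcases eq_or_ne f 0 with rfl | hf0
  · simp
  set S : EuclideanSpace ℂ G →ₗ[ℂ] EuclideanSpace ℂ G := leftConv A
  have hS : ∀ v, (S.adjoint ∘ₗ S) v = leftConv A⁻¹ (leftConv A v) := by
    simp [S, adjoint_leftConv]
  obtain ⟨μ, hfμ, hW⟩ := S.isSymmetric_adjoint_comp_self.exists_rayleigh_le_eigenspace_inf_ne_bot
    (fun v hv ↦ hS v ▸ leftConv_mem_meanZero _ (leftConv_mem_meanZero _ hv)) hf hf0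
  rw [← S.norm_apply_sq_eq_re_inner_adjoint_comp_self] at hfμ
  let W : Subrepresentation (rightReg ℂ (G := G)) :=
    ⟨eigenspace (S.adjoint ∘ₗ S) μ ⊓ meanZero ℂ G, fun g v hv ↦
      ⟨mem_eigenspace_iff.mpr (by rw [hS, leftConv_rightReg, leftConv_rightReg, ← hS,
        mem_eigenspace_iff.mp hv.1, map_smul]), rightReg_mem_meanZero g hv.2⟩⟩
  have hdim := hQR.rpow_lt_finrank W hW (disjoint_meanZero_invariants.mono_left inf_le_right)
  have htrace : μ * finrank ℂ W.toSubmodule ≤ Fintype.card G * #A :=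
    calc _ ≤ ∑ x : G, ‖(indicatorVec (A.image (·⁻¹ * x)) : EuclideanSpace ℂ G)‖ ^ 2 :=
          S.mul_finrank_le_of_le_eigenspace (leftConv_apply_eq_inner A) inf_le_left
      _ = Fintype.card G * #A := by
          rw [sum_congr rfl fun x _ ↦ by rw [norm_sq_indicatorVec,
            card_image_of_injective _ fun a b hab ↦ inv_injective (mul_right_cancel hab)]]
          simp
  have hμf : 0 ≤ μ * ‖f‖ ^ 2 := (sq_nonneg _).trans hfμ
  calc ‖S f‖ ^ 2 * (Fintype.card G : ℝ) ^ ((1 : ℝ) / L)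
      ≤ μ * ‖f‖ ^ 2 * finrank ℂ W.toSubmodule := by gcongr
    _ = μ * finrank ℂ W.toSubmodule * ‖f‖ ^ 2 := by ring
    _ ≤ Fintype.card G * #A * ‖f‖ ^ 2 := by gcongr

theorem IsQuasiRandom.mul_mul_eq_univ_of_lt [DecidableEq G] (hQR : IsQuasiRandom L G)
    {A B C : Finset G}
    (h : (Fintype.card G : ℝ) ^ 3 < #A * #B * #C * (Fintype.card G : ℝ) ^ ((1 : ℝ) / L)) :
    A * B * C = univ := by
  by_contra hne
  obtain ⟨x₀, hx₀⟩ : ∃ x₀, x₀ ∉ A * B * C := by simpa [eq_univ_iff_forall] using hne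
  set n : ℝ := (Fintype.card G : ℝ)
  set r : ℝ := n ^ ((1 : ℝ) / L)
  have hab : (0 : ℝ) < #A * #B :=
    pos_of_mul_pos_left (by nlinarith [pow_pos (show (0 : ℝ) < n by positivity) 3])
      (by positivity : (0 : ℝ) ≤ #C * r)
  have key : (#A * #B : ℝ) * (#A * #B * #C * r) ≤ #A * #B * n ^ 3 :=
    calc (#A * #B : ℝ) * (#A * #B * #C * r) = (#A * #B) ^ 2 * #C * r := by ring
      _ ≤ ‖leftConv A (balancedIndicator B : EuclideanSpace ℂ G)‖ ^ 2 * r := by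
          gcongr; exact sq_mul_card_le_norm_sq_leftConv_balancedIndicator hx₀
      _ ≤ n * #A * ‖(balancedIndicator B : EuclideanSpace ℂ G)‖ ^ 2 :=
          hQR.norm_sq_leftConv_mul_rpow_le A (balancedIndicator_mem_meanZero B)
      _ ≤ n * #A * (n ^ 2 * #B) := by gcongr; exact norm_sq_balancedIndicator_le B
      _ = #A * #B * n ^ 3 := by ring
  linarith [le_of_mul_le_mul_left key hab]

end QuasiRandom

theorem stmt10_general (L : ℕ)
    (G : Type) [Group G] [Fintype G] [DecidableEq G]
    (hQR : IsQuasiRandom L G)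
    (A B C : Finset G) (hA : A.Nonempty) (hB : B.Nonempty) (hC : C.Nonempty)
    (h : (1 - 1 / (3 * (L : ℝ))) * Real.log (Fintype.card G) <
      (Real.log A.card + Real.log B.card + Real.log C.card) / 3) :
    A * B * C = Finset.univ := by
  refine hQR.mul_mul_eq_univ_of_lt ?_
  set n : ℝ := (Fintype.card G : ℝ)
  have hn : 0 < n := by positivity
  have ha : (0 : ℝ) < A.card := by exact_mod_cast hA.card_pos
  have hb : (0 : ℝ) < B.card := by exact_mod_cast hB.card_pos
  have hc : (0 : ℝ) < C.card := by exact_mod_cast hC.card_pos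
  have hlog : (3 - 1 / L) * Real.log n < Real.log (A.card * B.card * C.card) := by
    rw [Real.log_mul (by positivity) hc.ne', Real.log_mul ha.ne' hb.ne']
    have : (3 - 1 / L) * Real.log n = 3 * ((1 - 1 / (3 * L)) * Real.log n) := by ring
    linarith
  have hlt : n ^ (3 - 1 / L : ℝ) < A.card * B.card * C.card := by
    rwa [← Real.log_lt_log_iff (by positivity) (by positivity), Real.log_rpow hn]
  calc n ^ 3 = n ^ (3 - 1 / L : ℝ) * n ^ ((1 : ℝ) / L) := by
        rw [← Real.rpow_add hn, sub_add_cancel]; norm_cast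
    _ < A.card * B.card * C.card * n ^ ((1 : ℝ) / L) := by gcongr

/-- **Gowers's theorem.** Let `G` be an `L⁻¹`-quasi-random finite group and
`X₁, X₂, X₃` independent `G`-valued random variables with supports `A, B, C`.  If
`(H₀(X₁) + H₀(X₂) + H₀(X₃))/3 > (1 - 1/(3L)) log |G|`, then the support of `X₁X₂X₃` is all
of `G`, i.e. `A·B·C = G`. -/
theorem stmt10 (L : ℕ) (hL : 0 < L)
    (G : Type) [Group G] [Fintype G] [DecidableEq G]
    (hQR : IsQuasiRandom L G)
    (A B C : Finset G) (hA : A.Nonempty) (hB : B.Nonempty) (hC : C.Nonempty)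
    (h : (1 - 1 / (3 * (L : ℝ))) * Real.log (Fintype.card G) <
      (Real.log A.card + Real.log B.card + Real.log C.card) / 3) :
    A * B * C = Finset.univ :=
  stmt10_general L G hQR A B C hA hB hC h
end

section
/- Suppose 𝔤₁ is a Lie algebra over 𝔽_{q₂} (with q₂ a power of p > 5) such that 𝔤₁ ⊗ 𝔽_{q₂} is perfect, i.e. [𝔤₁(𝔽_{q₂}), 𝔤₁(𝔽_{q₂})] = 𝔤₁(𝔽_{q₂}), and let 𝔷 denote its center over 𝔽̄_p. If M ⊆ 𝔤₁(𝔽̄_p) is an 𝔽_{q₂}-subspace with M + 𝔷(𝔽̄_p) = λ 𝔤₁(𝔽_{q₂}) + 𝔷(𝔽̄_p) for some nonzero λ ∈ 𝔽̄_p, and M satisfies [M, M] = M, then M = 𝔤₁(𝔽_{q₂}). -/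
open TensorProduct

/-- The `F`-span of brackets `⁅x, y⁆` with `x ∈ M`, `y ∈ N`, for `F`-subspaces of a Lie
algebra. -/
def bracketSpan {F A : Type*} [Field F] [LieRing A] [AddCommGroup A] [Module F A]
    (M N : Submodule F A) : Submodule F A :=
  Submodule.span F {z : A | ∃ x ∈ M, ∃ y ∈ N, ⁅x, y⁆ = z}

section helpers

variable {F : Type*} [Field F] {Ω : Type*} [Field Ω] [Algebra F Ω]
  {L : Type*} [LieRing L] [LieAlgebra F L]

/-- scaling by `c : Ω` as an `F`-linear map on the base change. -/
noncomputable def sc (c : Ω) : (Ω ⊗[F] L) →ₗ[F] (Ω ⊗[F] L) :=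
  (LinearMap.lsmul Ω (Ω ⊗[F] L) c).restrictScalars F

lemma sc_apply (c : Ω) (v : Ω ⊗[F] L) : sc c v = c • v := rfl

lemma map_sc_one (P : Submodule F (Ω ⊗[F] L)) : P.map (sc (1 : Ω)) = P := by
  have : sc (1 : Ω) = (LinearMap.id : (Ω ⊗[F] L) →ₗ[F] (Ω ⊗[F] L)) := by
    ext v; simp [sc_apply]
  rw [this, Submodule.map_id]

lemma map_sc_mul (a b : Ω) (P : Submodule F (Ω ⊗[F] L)) :
    (P.map (sc b)).map (sc a) = P.map (sc (a * b)) := by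
  rw [← Submodule.map_comp]
  congr 1
  ext v
  simp [sc_apply, mul_smul]

lemma smul_lie_smul (a b : Ω) (u v : Ω ⊗[F] L) :
    ⁅a • u, b • v⁆ = (a * b) • ⁅u, v⁆ := by
  rw [smul_lie (R := Ω), lie_smul (R := Ω), smul_smul]

lemma bracketSpan_map_sc (a b : Ω) (P Q : Submodule F (Ω ⊗[F] L)) :
    bracketSpan (P.map (sc a)) (Q.map (sc b)) = (bracketSpan P Q).map (sc (a * b)) := by
  unfold bracketSpan
  rw [Submodule.map_span]
  congr 1
  ext z
  simp only [Set.mem_image, Set.mem_setOf_eq, Submodule.mem_map]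
  constructor
  · rintro ⟨x, ⟨u, hu, rfl⟩, y, ⟨v, hv, rfl⟩, rfl⟩
    refine ⟨⁅u, v⁆, ⟨u, hu, v, hv, rfl⟩, ?_⟩
    rw [sc_apply, sc_apply, sc_apply, smul_lie_smul]
  · rintro ⟨w, ⟨u, hu, v, hv, rfl⟩, rfl⟩
    refine ⟨sc a u, ⟨u, hu, rfl⟩, sc b v, ⟨v, hv, rfl⟩, ?_⟩
    rw [sc_apply, sc_apply, sc_apply, smul_lie_smul]

lemma range_mk_eq_map (c : Ω) :
    LinearMap.range (TensorProduct.mk F Ω L c) =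
      (LinearMap.range (TensorProduct.mk F Ω L 1)).map (sc c) := by
  ext z
  simp only [LinearMap.mem_range, Submodule.mem_map, TensorProduct.mk_apply]
  constructor
  · rintro ⟨x, rfl⟩
    exact ⟨(1 : Ω) ⊗ₜ x, ⟨x, rfl⟩, by simp [sc_apply, TensorProduct.smul_tmul']⟩
  · rintro ⟨w, ⟨x, rfl⟩, rfl⟩
    exact ⟨x, by simp [sc_apply, TensorProduct.smul_tmul']⟩

lemma bracketSpan_sup_center (P : Submodule F (Ω ⊗[F] L)) :
    bracketSpan
      (P ⊔ Submodule.restrictScalars F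
        (LieSubmodule.toSubmodule (LieAlgebra.center Ω (Ω ⊗[F] L))))
      (P ⊔ Submodule.restrictScalars F
        (LieSubmodule.toSubmodule (LieAlgebra.center Ω (Ω ⊗[F] L)))) =
    bracketSpan P P := by
  set z := Submodule.restrictScalars F
    (LieSubmodule.toSubmodule (LieAlgebra.center Ω (Ω ⊗[F] L)))
  apply le_antisymm
  · apply Submodule.span_le.2
    rintro w ⟨x, hx, y, hy, rfl⟩
    obtain ⟨u, hu, c1, hc1, rfl⟩ := Submodule.mem_sup.1 hx
    obtain ⟨v, hv, c2, hc2, rfl⟩ := Submodule.mem_sup.1 hy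
    have hc1' : ∀ t : Ω ⊗[F] L, ⁅t, c1⁆ = 0 := fun t =>
      (LieModule.mem_maxTrivSubmodule Ω (Ω ⊗[F] L) (Ω ⊗[F] L) c1).1 hc1 t
    have hc2' : ∀ t : Ω ⊗[F] L, ⁅t, c2⁆ = 0 := fun t =>
      (LieModule.mem_maxTrivSubmodule Ω (Ω ⊗[F] L) (Ω ⊗[F] L) c2).1 hc2 t
    have hc1'' : ∀ t : Ω ⊗[F] L, ⁅c1, t⁆ = 0 := fun t => by
      rw [← lie_skew, hc1' t, neg_zero]
    have : ⁅u + c1, v + c2⁆ = ⁅u, v⁆ := by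
      rw [add_lie, lie_add, lie_add, hc1'' v, hc1'' c2, hc2' u, add_zero, add_zero, add_zero]
    rw [this]
    exact Submodule.subset_span ⟨u, hu, v, hv, rfl⟩
  · exact Submodule.span_mono fun w ⟨x, hx, y, hy, h⟩ =>
      ⟨x, le_sup_left (α := Submodule F (Ω ⊗[F] L)) hx,
       y, le_sup_left (α := Submodule F (Ω ⊗[F] L)) hy, h⟩

end helpers

/-- Let `q₂` be a power of a prime `p > 5`, `𝔤₁` a Lie algebra over
`F = 𝔽_{q₂}` whose group of `F`-points `𝔤₁(𝔽_{q₂})` (the image of `𝔤₁` in the base change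
to `Ω = 𝔽̄_p`) is perfect, and let `𝔷` be the center of the base change.  If
`M ⊆ 𝔤₁(𝔽̄_p)` is an `𝔽_{q₂}`-subspace with `M + 𝔷 = λ 𝔤₁(𝔽_{q₂}) + 𝔷` for some
`λ ≠ 0`, and `[M, M] = M`, then `M = 𝔤₁(𝔽_{q₂})`. -/
theorem stmt17 (p : ℕ) [Fact p.Prime] (hp : 5 < p)
    (F : Type*) [Field F] [Fintype F] [CharP F p]
    (L : Type*) [LieRing L] [LieAlgebra F L]
    (lam : AlgebraicClosure F) (hlam : lam ≠ 0)
    (M : Submodule F ((AlgebraicClosure F) ⊗[F] L))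
    -- `𝔤₁(𝔽_{q₂})`, the canonical copy of `L` inside the base change
    (gF : Submodule F ((AlgebraicClosure F) ⊗[F] L))
    (hgF : gF = LinearMap.range (TensorProduct.mk F (AlgebraicClosure F) L 1))
    -- `λ 𝔤₁(𝔽_{q₂})`
    (lamgF : Submodule F ((AlgebraicClosure F) ⊗[F] L))
    (hlamgF : lamgF = LinearMap.range (TensorProduct.mk F (AlgebraicClosure F) L lam))
    -- `𝔷`, the center of the base-changed Lie algebra, as an `F`-subspace
    (zF : Submodule F ((AlgebraicClosure F) ⊗[F] L))
    (hzF : zF = Submodule.restrictScalars F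
      (LieSubmodule.toSubmodule
        (LieAlgebra.center (AlgebraicClosure F) ((AlgebraicClosure F) ⊗[F] L))))
    -- `𝔤₁(𝔽_{q₂})` is perfect
    (hperf : bracketSpan gF gF = gF)
    (hMz : M ⊔ zF = lamgF ⊔ zF)
    (hMM : bracketSpan M M = M) :
    M = gF := by
  subst hzF
  -- step 1: bracketSpan M M = bracketSpan lamgF lamgF
  have h1 : bracketSpan M M = bracketSpan lamgF lamgF := by
    rw [← bracketSpan_sup_center M, hMz, bracketSpan_sup_center]
  -- step 2: lamgF as scaled gF
  have h2 : lamgF = gF.map (sc lam) := by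
    rw [hlamgF, hgF, range_mk_eq_map]
  -- step 3: M = gF.map (sc (lam*lam))
  have h3 : M = gF.map (sc (lam * lam)) := by
    rw [← hMM, h1, h2, bracketSpan_map_sc, hperf]
  -- step 4: self-similarity
  have h4 : gF.map (sc (lam * lam)) = gF.map (sc ((lam * lam) * (lam * lam))) := by
    conv_lhs => rw [← h3, ← hMM, h3, bracketSpan_map_sc, hperf]
  -- step 5: cancel
  have h5 : gF = gF.map (sc (lam * lam)) := by
    have hne : (lam * lam) ≠ 0 := mul_ne_zero hlam hlam
    have := congrArg (Submodule.map (sc ((lam * lam)⁻¹))) h4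
    rwa [map_sc_mul, map_sc_mul, inv_mul_cancel₀ hne, map_sc_one,
      ← mul_assoc, inv_mul_cancel₀ hne, one_mul] at this
  rw [h3, ← h5]
end

section
/- Let G be a group, S ⊆ G a finite symmetric subset (S = S⁻¹), and k ≥ 3 an integer. Then (k−2)(log|S·S·S| − log|S|) ≥ log|S^k| − log|S|, where S^k denotes the set of products of k elements of S. Equivalently, |S^k| ≤ (|S·S·S|/|S|)^{k−2} |S|. -/
open Pointwise

/-! The inequality is the logarithm of `#(A ^ m) ≤ K ^ (m - 2) * #A` for symmetric `A` with
tripling constant `K = #(A ^ 3) / #A`, which Mathlib proves from the Ruzsa triangle inequality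
(`Finset.small_pow_of_small_tripling`). -/

namespace Finset

variable {G : Type*} [Group G] [DecidableEq G]

lemma inv_eq_self_of_forall_inv_mem {A : Finset G} (hA : ∀ a ∈ A, a⁻¹ ∈ A) : A⁻¹ = A :=
  eq_of_subset_of_card_le (fun _ ha ↦ by simpa using hA _ (mem_inv'.1 ha)) (card_inv A).ge

lemma log_card_pow_sub_log_card_le {A : Finset G} (hA : A.Nonempty) (hAsymm : A⁻¹ = A) {m : ℕ}
    (hm : 3 ≤ m) :
    Real.log #(A ^ m) - Real.log #A ≤ (m - 2 : ℕ) * (Real.log #(A ^ 3) - Real.log #A) := by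
  have hA₀ : (0 : ℝ) < #A := by exact_mod_cast hA.card_pos
  have hA₃ : (0 : ℝ) < #(A ^ 3) := by exact_mod_cast (hA.pow (n := 3)).card_pos
  have hAm : (0 : ℝ) < #(A ^ m) := by exact_mod_cast (hA.pow (n := m)).card_pos
  have hK : (#(A ^ 3) : ℝ) ≤ #(A ^ 3) / #A * #A := (div_mul_cancel₀ _ hA₀.ne').ge
  have hlog := Real.log_le_log hAm (small_pow_of_small_tripling hm hK hAsymm)
  rw [Real.log_mul (by positivity) hA₀.ne', Real.log_pow, Real.log_div hA₃.ne' hA₀.ne'] at hlog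
  linarith

end Finset

/-- **tripling controls all products.**  Let `S` be a finite nonempty
symmetric subset of a group `G` and `k ≥ 3`.  Then
`(k - 2)(log|S·S·S| - log|S|) ≥ log|S^k| - log|S|`. -/
theorem stmt19 {G : Type*} [Group G] [DecidableEq G]
    (S : Finset G) (hS : S.Nonempty) (hsym : ∀ s ∈ S, s⁻¹ ∈ S)
    (k : ℕ) (hk : 3 ≤ k) :
    Real.log ((S ^ k).card) - Real.log S.card ≤
      ((k : ℝ) - 2) * (Real.log ((S * S * S).card) - Real.log S.card) := by
  have h := S.log_card_pow_sub_log_card_le hS (Finset.inv_eq_self_of_forall_inv_mem hsym) hk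
  rwa [pow_three', Nat.cast_sub (by omega), Nat.cast_ofNat] at h
end
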